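/- arXiv:1903.06850 — 6 statements merged into one kernel-verified Lean document; each statement's English description precedes it below -/
import Mathlib

section
/- Let P_1,...,P_n be random variables where P_j ~ U[0,1] is independent of (P_i)_{i != j}. Let B be any Borel-measurable event determined by (P_i)_{i != j}, let T be a subcollection of the variables excluding P_j, and for alpha in (0,1) define omega = 1 + sum_{s=1}^t 1{P_j > max of the s-th subcollection}. Then E[omega * 1{B, P_j <= alpha}] <= (alpha/(1-alpha)) * E[omega * 1{B, P_j > alpha}]. -/
open MeasureTheory ProbabilityTheory
open scoped Classical

/-- Lemma 2 of the paper. Let `P j ~ U[0,1]` be independent of the other p-values,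
let `B` be an event determined by the other p-values, and let
`ω_j = 1 + ∑_s 1{P j > max of the s-th subcollection T s}` (subcollections not
containing `j`). Then for `α ∈ (0,1)`,
`E[ω_j 1{B, P j ≤ α}] ≤ (α/(1-α)) E[ω_j 1{B, P j > α}]`. -/
theorem weight_lemma {Ω : Type*} [MeasurableSpace Ω] (μ : Measure Ω)
    [IsProbabilityMeasure μ] (n : ℕ) (P : Fin n → Ω → ℝ) (j : Fin n)
    (hmeas : ∀ i, Measurable (P i))
    (hunif : Measure.map (P j) μ = volume.restrict (Set.Icc (0:ℝ) 1))
    (hindep : IndepFun (P j) (fun ω => fun i : {i : Fin n // i ≠ j} => P i.1 ω) μ)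
    (B : Set Ω)
    (hB : MeasurableSet[MeasurableSpace.comap
        (fun ω => fun i : {i : Fin n // i ≠ j} => P i.1 ω) MeasurableSpace.pi] B)
    (t : ℕ) (T : Fin t → Finset {i : Fin n // i ≠ j}) (hT : ∀ s, (T s).Nonempty)
    (α : ℝ) (hα : α ∈ Set.Ioo (0:ℝ) 1) :
    (∫ ω in B ∩ {ω | P j ω ≤ α},
        (1 + ∑ s : Fin t, if ∀ i ∈ T s, P i.1 ω < P j ω then (1:ℝ) else 0) ∂μ) ≤
      (α / (1 - α)) *
      ∫ ω in B ∩ {ω | α < P j ω},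
        (1 + ∑ s : Fin t, if ∀ i ∈ T s, P i.1 ω < P j ω then (1:ℝ) else 0) ∂μ := by
  obtain ⟨hα0, hα1⟩ := hα
  have h1α : (0:ℝ) < 1 - α := by linarith
  set c : ℝ := α / (1 - α) with hc
  have hc0 : 0 ≤ c := div_nonneg hα0.le h1α.le
  obtain ⟨B', hB'm, hB'eq⟩ := hB
  set X : Ω → ({i : Fin n // i ≠ j} → ℝ) := fun ω => fun i => P i.1 ω with hXdef
  have hXm : Measurable X := measurable_pi_lambda _ fun i => hmeas i.1
  have hPj : Measurable (P j) := hmeas j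
  have hBeq : B = X ⁻¹' B' := hB'eq.symm
  have hBm : MeasurableSet B := hBeq ▸ hXm hB'm
  set L : Measure ℝ := volume.restrict (Set.Icc (0:ℝ) 1) with hLdef
  have hLprob : IsProbabilityMeasure L := by
    rw [← hunif]; exact Measure.isProbabilityMeasure_map hPj.aemeasurable
  set ν : Measure ({i : Fin n // i ≠ j} → ℝ) := Measure.map X μ with hνdef
  have hνprob : IsProbabilityMeasure ν := Measure.isProbabilityMeasure_map hXm.aemeasurable
  have hprod : Measure.map (fun ω => (X ω, P j ω)) μ = ν.prod L := by
    have h := (indepFun_iff_map_prod_eq_prod_map_map hXm.aemeasurable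
      hPj.aemeasurable).mp hindep.symm
    rw [h, hunif]
  -- the events
  set A : Fin t → Set Ω := fun s => {ω | ∀ i ∈ T s, P i.1 ω < P j ω} with hAdef
  have hAm : ∀ s, MeasurableSet (A s) := by
    intro s
    have : A s = ⋂ i ∈ T s, {ω | P i.1 ω < P j ω} := by
      ext ω; simp [hAdef]
    rw [this]
    exact MeasurableSet.biInter (Finset.countable_toSet _)
      (fun i _ => measurableSet_lt (hmeas i.1) hPj)
  set EL : Set Ω := B ∩ {ω | P j ω ≤ α} with hELdef
  set ER : Set Ω := B ∩ {ω | α < P j ω} with hERdef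
  have hELm : MeasurableSet EL := hBm.inter (measurableSet_le hPj measurable_const)
  have hERm : MeasurableSet ER := hBm.inter (measurableSet_lt measurable_const hPj)
  -- decompose integrals
  have key : ∀ E : Set Ω, MeasurableSet E →
      (∫ ω in E, (1 + ∑ s : Fin t,
          if ∀ i ∈ T s, P i.1 ω < P j ω then (1:ℝ) else 0) ∂μ)
        = (μ E).toReal + ∑ s : Fin t, (μ (A s ∩ E)).toReal := by
    intro E hE
    have hrw : ∀ s : Fin t, (fun ω => if ∀ i ∈ T s, P i.1 ω < P j ω then (1:ℝ) else 0)
        = (A s).indicator (fun _ => (1:ℝ)) := by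
      intro s; ext ω; simp [Set.indicator_apply, hAdef, Set.mem_setOf_eq]
    have hint : ∀ s : Fin t,
        Integrable ((A s).indicator (fun _ => (1:ℝ))) (μ.restrict E) :=
      fun s => (integrable_const (1:ℝ)).indicator (hAm s)
    calc (∫ ω in E, (1 + ∑ s : Fin t,
          if ∀ i ∈ T s, P i.1 ω < P j ω then (1:ℝ) else 0) ∂μ)
        = (∫ ω in E, (1:ℝ) ∂μ) + ∫ ω in E,
            (∑ s : Fin t, (A s).indicator (fun _ => (1:ℝ)) ω) ∂μ := by
          rw [← integral_add (integrable_const 1)]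
          · congr 1; ext ω; congr 1
            exact Finset.sum_congr rfl fun s _ => congrFun (hrw s) ω
          · exact integrable_finset_sum _ fun s _ => hint s
      _ = (μ E).toReal + ∑ s : Fin t, (μ (A s ∩ E)).toReal := by
          rw [setIntegral_const, smul_eq_mul, mul_one,
            integral_finset_sum _ fun s _ => hint s]
          congr 1
          refine Finset.sum_congr rfl fun s _ => ?_
          rw [show (∫ ω in E, (A s).indicator (fun _ => (1:ℝ)) ω ∂μ)
              = ((μ.restrict E) (A s)).toReal • (1:ℝ) from
            integral_indicator_const (1:ℝ) (hAm s)]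
          rw [Measure.restrict_apply (hAm s), smul_eq_mul, mul_one]
  -- constant terms
  have hIicL : L (Set.Iic α) = ENNReal.ofReal α := by
    rw [hLdef, Measure.restrict_apply measurableSet_Iic]
    have : Set.Iic α ∩ Set.Icc (0:ℝ) 1 = Set.Icc 0 α := by
      ext u; constructor
      · rintro ⟨h1, h2, _⟩; exact ⟨h2, h1⟩
      · rintro ⟨h1, h2⟩; exact ⟨h2, h1, le_trans h2 hα1.le⟩
    rw [this, Real.volume_Icc, sub_zero]
  have hIoiL : L (Set.Ioi α) = ENNReal.ofReal (1 - α) := by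
    rw [hLdef, Measure.restrict_apply measurableSet_Ioi]
    have : Set.Ioi α ∩ Set.Icc (0:ℝ) 1 = Set.Ioc α 1 := by
      ext u; constructor
      · rintro ⟨h1, _, h3⟩; exact ⟨h1, h3⟩
      · rintro ⟨h1, h2⟩; exact ⟨h1, (le_of_lt (lt_trans hα0 h1)), h2⟩
    rw [this, Real.volume_Ioc]
  have hPjIic : μ (P j ⁻¹' Set.Iic α) = ENNReal.ofReal α := by
    rw [← Measure.map_apply hPj measurableSet_Iic, hunif]; exact hIicL
  have hPjIoi : μ (P j ⁻¹' Set.Ioi α) = ENNReal.ofReal (1 - α) := by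
    rw [← Measure.map_apply hPj measurableSet_Ioi, hunif]; exact hIoiL
  have hEL : μ EL = ENNReal.ofReal α * μ B := by
    have h := hindep.measure_inter_preimage_eq_mul (Set.Iic α) B' measurableSet_Iic hB'm
    rw [hELdef, hBeq]
    have : X ⁻¹' B' ∩ {ω | P j ω ≤ α} = P j ⁻¹' Set.Iic α ∩ X ⁻¹' B' := by
      ext ω; simp [Set.mem_setOf_eq]; tauto
    rw [this, h, hPjIic]
  have hER : μ ER = ENNReal.ofReal (1 - α) * μ B := by
    have h := hindep.measure_inter_preimage_eq_mul (Set.Ioi α) B' measurableSet_Ioi hB'm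
    rw [hERdef, hBeq]
    have : X ⁻¹' B' ∩ {ω | α < P j ω} = P j ⁻¹' Set.Ioi α ∩ X ⁻¹' B' := by
      ext ω; simp [Set.mem_setOf_eq]; tauto
    rw [this, h, hPjIoi]
  -- the mixed terms, via the product measure
  have hmix : ∀ s : Fin t,
      μ (A s ∩ EL) ≤ ENNReal.ofReal c * μ (A s ∩ ER) := by
    intro s
    set CL : Set (({i : Fin n // i ≠ j} → ℝ) × ℝ) :=
      {p | p.1 ∈ B' ∧ p.2 ≤ α ∧ ∀ i ∈ T s, p.1 i < p.2} with hCLdef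
    set CR : Set (({i : Fin n // i ≠ j} → ℝ) × ℝ) :=
      {p | p.1 ∈ B' ∧ α < p.2 ∧ ∀ i ∈ T s, p.1 i < p.2} with hCRdef
    have hforall : MeasurableSet {p : ({i : Fin n // i ≠ j} → ℝ) × ℝ |
        ∀ i ∈ T s, p.1 i < p.2} := by
      have : {p : ({i : Fin n // i ≠ j} → ℝ) × ℝ | ∀ i ∈ T s, p.1 i < p.2}
          = ⋂ i ∈ T s, {p : ({i : Fin n // i ≠ j} → ℝ) × ℝ | p.1 i < p.2} := by
        ext p; simp
      rw [this]
      exact MeasurableSet.biInter (Finset.countable_toSet _) fun i _ =>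
        measurableSet_lt (measurable_fst.eval) measurable_snd
    have hCLm : MeasurableSet CL := by
      refine (measurable_fst hB'm).inter (MeasurableSet.inter ?_ hforall)
      exact measurable_snd measurableSet_Iic
    have hCRm : MeasurableSet CR := by
      refine (measurable_fst hB'm).inter (MeasurableSet.inter ?_ hforall)
      exact measurable_snd measurableSet_Ioi
    have hpreL : A s ∩ EL = (fun ω => (X ω, P j ω)) ⁻¹' CL := by
      ext ω
      simp only [hCLdef, Set.mem_preimage, Set.mem_setOf_eq, hELdef, hAdef, hBeq,
        Set.mem_inter_iff]
      tauto
    have hpreR : A s ∩ ER = (fun ω => (X ω, P j ω)) ⁻¹' CR := by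
      ext ω
      simp only [hCRdef, Set.mem_preimage, Set.mem_setOf_eq, hERdef, hAdef, hBeq,
        Set.mem_inter_iff]
      tauto
    have hmapL : μ (A s ∩ EL) = (ν.prod L) CL := by
      rw [hpreL, ← hprod, Measure.map_apply (hXm.prodMk hPj) hCLm]
    have hmapR : μ (A s ∩ ER) = (ν.prod L) CR := by
      rw [hpreR, ← hprod, Measure.map_apply (hXm.prodMk hPj) hCRm]
    rw [hmapL, hmapR, Measure.prod_apply hCLm, Measure.prod_apply hCRm,
      ← MeasureTheory.lintegral_const_mul' _ _ ENNReal.ofReal_ne_top]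
    refine lintegral_mono fun x => ?_
    by_cases hx : x ∈ B'
    · set m : ℝ := ((T s).image x).max' ((hT s).image x) with hmdef
      have hiff : ∀ u : ℝ, (∀ i ∈ T s, x i < u) ↔ m < u := by
        intro u
        rw [hmdef, Finset.max'_lt_iff]
        constructor
        · intro h b hb; obtain ⟨i, hi, rfl⟩ := Finset.mem_image.mp hb; exact h i hi
        · intro h i hi; exact h _ (Finset.mem_image_of_mem x hi)
      have hsecL : Prod.mk x ⁻¹' CL = Set.Ioc m α := by
        ext u
        simp only [hCLdef, Set.mem_preimage, Set.mem_setOf_eq, hx, true_and,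
          Set.mem_Ioc, hiff u]
        tauto
      have hsecR : Prod.mk x ⁻¹' CR = {u | α < u ∧ m < u} := by
        ext u
        simp only [hCRdef, Set.mem_preimage, Set.mem_setOf_eq, hx, true_and, hiff u]
      rw [hsecL, hsecR]
      rcases le_or_gt α m with hm | hm
      · rw [Set.Ioc_eq_empty (by exact fun h => absurd (lt_of_le_of_lt hm h) (not_lt.mpr le_rfl))]
        simp
      · have hRset : {u : ℝ | α < u ∧ m < u} = Set.Ioi α := by
          ext u; simp only [Set.mem_setOf_eq, Set.mem_Ioi]
          exact ⟨fun h => h.1, fun h => ⟨h, lt_trans hm h⟩⟩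
        rw [hRset, hIoiL]
        have hLle : L (Set.Ioc m α) ≤ ENNReal.ofReal α := by
          rw [hLdef, Measure.restrict_apply measurableSet_Ioc]
          have hsub : Set.Ioc m α ∩ Set.Icc 0 1 ⊆ Set.Icc (0:ℝ) α :=
            fun u hu => Set.mem_Icc.mpr ⟨hu.2.1, hu.1.2⟩
          calc volume (Set.Ioc m α ∩ Set.Icc 0 1) ≤ volume (Set.Icc (0:ℝ) α) :=
                measure_mono hsub
            _ = ENNReal.ofReal α := by rw [Real.volume_Icc, sub_zero]
        refine le_trans hLle ?_
        rw [← ENNReal.ofReal_mul hc0, hc, div_mul_cancel₀ _ (ne_of_gt h1α)]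
    · have hL0 : Prod.mk x ⁻¹' CL = ∅ := by
        ext u; simp [hCLdef, hx]
      rw [hL0]; simp
  -- put everything together
  rw [key EL hELm, key ER hERm, mul_add, Finset.mul_sum]
  refine add_le_add ?_ (Finset.sum_le_sum fun s _ => ?_)
  · rw [hEL, hER, ENNReal.toReal_mul, ENNReal.toReal_mul,
      ENNReal.toReal_ofReal hα0.le, ENNReal.toReal_ofReal h1α.le, ← mul_assoc,
      hc, div_mul_cancel₀ _ (ne_of_gt h1α)]
  · have h := hmix s
    have hfin : ENNReal.ofReal c * μ (A s ∩ ER) ≠ ⊤ :=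
      ENNReal.mul_ne_top ENNReal.ofReal_ne_top (measure_ne_top _ _)
    calc (μ (A s ∩ EL)).toReal ≤ (ENNReal.ofReal c * μ (A s ∩ ER)).toReal :=
          ENNReal.toReal_mono hfin h
      _ = c * (μ (A s ∩ ER)).toReal := by
          rw [ENNReal.toReal_mul, ENNReal.toReal_ofReal hc0]
end

section
/- Let P ~ U[0,1] be independent of a random vector Q, let B be an event measurable with respect to Q, and let M = max of some coordinates of Q. Then for any alpha in (0,1), Pr(B, P > M, P <= alpha)/alpha <= Pr(B, P > M, P > alpha)/(1 - alpha). -/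
open MeasureTheory ProbabilityTheory

/-- Key sufficient inequality in the proof of Lemma 2: for `P ~ U[0,1]` independent of
a random vector `Q`, `B` an event determined by `Q`, and `M = max` of some coordinates
of `Q`, for any `α ∈ (0,1)`:
`Pr(B, P > M, P ≤ α)/α ≤ Pr(B, P > M, P > α)/(1 - α)`. -/
theorem cond_max_ineq {Ω : Type*} [MeasurableSpace Ω] (μ : Measure Ω)
    [IsProbabilityMeasure μ] (m : ℕ) (P : Ω → ℝ) (Q : Ω → Fin m → ℝ)
    (hP : Measurable P) (hQ : Measurable Q)
    (hunif : Measure.map P μ = volume.restrict (Set.Icc (0:ℝ) 1))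
    (hindep : IndepFun P Q μ)
    (B : Set Ω) (hB : MeasurableSet[MeasurableSpace.comap Q MeasurableSpace.pi] B)
    (s : Finset (Fin m)) (hs : s.Nonempty)
    (α : ℝ) (hα : α ∈ Set.Ioo (0:ℝ) 1) :
    (μ (B ∩ {ω | s.sup' hs (Q ω) < P ω} ∩ {ω | P ω ≤ α})).toReal / α ≤
      (μ (B ∩ {ω | s.sup' hs (Q ω) < P ω} ∩ {ω | α < P ω})).toReal / (1 - α) := by
  obtain ⟨hα0, hα1⟩ := hα
  obtain ⟨A, hA, hBA⟩ := hB
  -- the sup function on the vector space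
  set M : (Fin m → ℝ) → ℝ := fun q => s.sup' hs q with hM
  have hMmeas : Measurable M := by
    have : M = s.sup' hs (fun i (q : Fin m → ℝ) => q i) := by
      funext q; rw [Finset.sup'_apply]
    rw [this]
    exact Finset.measurable_sup' hs fun i _ => measurable_pi_apply i
  -- joint law is product
  have hg : Measurable (fun ω => (Q ω, P ω)) := hQ.prodMk hP
  have hprod : μ.map (fun ω => (Q ω, P ω)) = (μ.map Q).prod (μ.map P) :=
    (indepFun_iff_map_prod_eq_prod_map_map hQ.aemeasurable hP.aemeasurable).mp hindep.symm
  set ν := μ.map Q with hν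
  set π := μ.map P with hπ
  haveI : IsProbabilityMeasure π := Measure.isProbabilityMeasure_map hP.aemeasurable
  -- the target sets as preimages
  set T₁ : Set ((Fin m → ℝ) × ℝ) := {x | x.1 ∈ A ∧ M x.1 < x.2 ∧ x.2 ≤ α} with hT₁
  set T₂ : Set ((Fin m → ℝ) × ℝ) := {x | x.1 ∈ A ∧ M x.1 < x.2 ∧ α < x.2} with hT₂
  have hT₁m : MeasurableSet T₁ := by
    refine (hA.preimage measurable_fst).inter (MeasurableSet.inter ?_ ?_)
    · exact measurableSet_lt (hMmeas.comp measurable_fst) measurable_snd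
    · exact measurableSet_le measurable_snd measurable_const
  have hT₂m : MeasurableSet T₂ := by
    refine (hA.preimage measurable_fst).inter (MeasurableSet.inter ?_ ?_)
    · exact measurableSet_lt (hMmeas.comp measurable_fst) measurable_snd
    · exact measurableSet_lt measurable_const measurable_snd
  have hpre₁ : B ∩ {ω | s.sup' hs (Q ω) < P ω} ∩ {ω | P ω ≤ α}
      = (fun ω => (Q ω, P ω)) ⁻¹' T₁ := by
    rw [← hBA]; ext ω; simp [hT₁, hM, Set.mem_preimage, and_assoc]
  have hpre₂ : B ∩ {ω | s.sup' hs (Q ω) < P ω} ∩ {ω | α < P ω}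
      = (fun ω => (Q ω, P ω)) ⁻¹' T₂ := by
    rw [← hBA]; ext ω; simp [hT₂, hM, Set.mem_preimage, and_assoc]
  have hμ₁ : μ (B ∩ {ω | s.sup' hs (Q ω) < P ω} ∩ {ω | P ω ≤ α})
      = ∫⁻ q, π {p | (q, p) ∈ T₁} ∂ν := by
    rw [hpre₁, ← Measure.map_apply hg hT₁m, hprod, Measure.prod_apply hT₁m]
    rfl
  have hμ₂ : μ (B ∩ {ω | s.sup' hs (Q ω) < P ω} ∩ {ω | α < P ω})
      = ∫⁻ q, π {p | (q, p) ∈ T₂} ∂ν := by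
    rw [hpre₂, ← Measure.map_apply hg hT₂m, hprod, Measure.prod_apply hT₂m]
    rfl
  -- pointwise slice inequality
  have hslice : ∀ q, π {p | (q, p) ∈ T₁} * ENNReal.ofReal (1 - α)
      ≤ π {p | (q, p) ∈ T₂} * ENNReal.ofReal α := by
    intro q
    by_cases hqA : q ∈ A
    · have h1 : {p | (q, p) ∈ T₁} = Set.Ioc (M q) α := by
        ext p; simp [hT₁, hqA, Set.mem_Ioc]
      have h2 : {p | (q, p) ∈ T₂} = Set.Ioi (max (M q) α) := by
        ext p; simp [hT₂, hqA, Set.mem_Ioi, lt_max_iff, max_lt_iff]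
      rw [h1, h2, hunif]
      rw [Measure.restrict_apply measurableSet_Ioc, Measure.restrict_apply measurableSet_Ioi]
      by_cases hMα : M q ≤ α
      · have e2 : Set.Ioi (max (M q) α) ∩ Set.Icc (0:ℝ) 1 = Set.Ioc α 1 := by
          rw [max_eq_right hMα]
          ext p
          simp only [Set.mem_Ioc, Set.mem_Icc, Set.mem_Ioi, Set.mem_inter_iff]
          constructor
          · rintro ⟨h1, _, h3⟩; exact ⟨h1, h3⟩
          · rintro ⟨h1, h3⟩; exact ⟨h1, le_of_lt (hα0.trans h1), h3⟩
        rw [e2, Real.volume_Ioc]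
        have hsub : Set.Ioc (M q) α ∩ Set.Icc (0:ℝ) 1 ⊆ Set.Icc 0 α := fun p hp =>
          ⟨hp.2.1, hp.1.2⟩
        calc volume (Set.Ioc (M q) α ∩ Set.Icc (0:ℝ) 1) * ENNReal.ofReal (1 - α)
            ≤ volume (Set.Icc (0:ℝ) α) * ENNReal.ofReal (1 - α) :=
              mul_le_mul_left (measure_mono hsub) _
          _ = ENNReal.ofReal (1 - α) * ENNReal.ofReal α := by
              rw [Real.volume_Icc, mul_comm]; norm_num
      · have e1 : Set.Ioc (M q) α = ∅ := Set.Ioc_eq_empty (fun h => hMα h.le)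
        simp [e1]
    · have h1 : {p | (q, p) ∈ T₁} = ∅ := by ext p; simp [hT₁, hqA]
      simp [h1]
  -- integrate
  have hmeas₁ : Measurable (fun q => π {p | (q, p) ∈ T₁}) :=
    measurable_measure_prodMk_left hT₁m
  have hmeas₂ : Measurable (fun q => π {p | (q, p) ∈ T₂}) :=
    measurable_measure_prodMk_left hT₂m
  have key : μ (B ∩ {ω | s.sup' hs (Q ω) < P ω} ∩ {ω | P ω ≤ α}) * ENNReal.ofReal (1 - α)
      ≤ μ (B ∩ {ω | s.sup' hs (Q ω) < P ω} ∩ {ω | α < P ω}) * ENNReal.ofReal α := by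
    rw [hμ₁, hμ₂, ← lintegral_mul_const _ hmeas₁, ← lintegral_mul_const _ hmeas₂]
    exact lintegral_mono fun q => hslice q
  -- convert to reals
  set a := μ (B ∩ {ω | s.sup' hs (Q ω) < P ω} ∩ {ω | P ω ≤ α}) with ha
  set b := μ (B ∩ {ω | s.sup' hs (Q ω) < P ω} ∩ {ω | α < P ω}) with hb
  have hane : a ≠ ⊤ := measure_ne_top μ _
  have hbne : b ≠ ⊤ := measure_ne_top μ _
  rw [div_le_div_iff₀ hα0 (by linarith)]
  have := ENNReal.toReal_mono (by finiteness) key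
  rw [ENNReal.toReal_mul, ENNReal.toReal_mul, ENNReal.toReal_ofReal (by linarith),
    ENNReal.toReal_ofReal hα0.le] at this
  linarith
end

section
/- Let V_1,...,V_L and R_1,...,R_L be nonnegative integers with V_l <= R_l for each l, and let D_{l-1} = sum_{l'=1}^{l-1} R_{l'}. Then (sum_{l=1}^L V_l) / max(sum_{l=1}^L R_l, 1) <= sum_{l=1}^L V_l / (D_{l-1} + max(R_l, 1)). -/
/-!
The bound holds term by term: a level with `V l > 0` has `R l ≥ 1`, so its denominator
`D_{l-1} + R l` is at most the total count `∑ R`.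
-/

open Finset

theorem sum_Icc_pred_add_le_sum_Icc {M : Type*} [AddCommMonoid M] [PartialOrder M]
    [CanonicallyOrderedAdd M] (f : ℕ → M) {l L : ℕ} (hl : l ∈ Icc 1 L) :
    ∑ i ∈ Icc 1 (l - 1), f i + f l ≤ ∑ i ∈ Icc 1 L, f i := by
  obtain ⟨h1l, hlL⟩ := mem_Icc.mp hl
  obtain ⟨k, rfl⟩ : ∃ k, l = k + 1 := ⟨l - 1, by omega⟩
  rw [Nat.add_sub_cancel, ← sum_Icc_succ_top (by omega)]
  exact sum_le_sum_of_subset (Icc_subset_Icc_right hlL)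

theorem div_max_one_le_div_add_max_one {V R D S : ℕ} (hVR : V ≤ R) (hDRS : D + R ≤ S) :
    (V : ℝ) / max (S : ℝ) 1 ≤ V / (D + max (R : ℝ) 1) := by
  rcases Nat.eq_zero_or_pos V with hV | hV
  · simp [hV]
  have hR : (1 : ℝ) ≤ R := by exact_mod_cast hV.trans_le hVR
  rw [max_eq_left hR]
  have hden : (D : ℝ) + R ≤ max (S : ℝ) 1 := le_max_of_le_left (by exact_mod_cast hDRS)
  exact div_le_div_of_nonneg_left (by positivity) (by positivity) hden

/-- Level-wise decomposition bound on the false assignment proportion: for nonnegative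
integers `V l ≤ R l` and cumulative counts `D_{l-1} = ∑_{l'=1}^{l-1} R l'`,
`(∑ V l) / max(∑ R l, 1) ≤ ∑_l V l / (D_{l-1} + max(R l, 1))`. -/
theorem fap_level_decomposition (L : ℕ) (V R : ℕ → ℕ) (hVR : ∀ l, V l ≤ R l) :
    ((∑ l ∈ Finset.Icc 1 L, V l : ℕ) : ℝ) /
        max ((∑ l ∈ Finset.Icc 1 L, R l : ℕ) : ℝ) 1 ≤
      ∑ l ∈ Finset.Icc 1 L,
        (V l : ℝ) / (((∑ l' ∈ Finset.Icc 1 (l - 1), R l' : ℕ) : ℝ) + max (R l : ℝ) 1) := by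
  rw [Nat.cast_sum, sum_div]
  exact sum_le_sum fun l hl =>
    div_max_one_le_div_add_max_one (hVR l) (sum_Icc_pred_add_le_sum_Icc R hl)
end

section
/- Let T be a finite rooted tree in which every leaf has the same depth L (a complete-level tree), and for each leaf j define the weight omega_j(sigma) = 1 + number of proper ancestors a of j such that j has the maximal rank under a total order sigma among all leaves descending from a. Then the multiset {omega_j(sigma) : j leaf} sorted in ascending order is the same for every total order sigma on the leaves. -/
open scoped Classical

set_option linter.unusedSectionVars false

namespace SortedWeightsAux

open Finset Function

variable {N : Type*} [Fintype N]

lemma depth_iter (parent : N → N) (depth : N → ℕ) (root : N)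
    (hdepth0 : ∀ v, depth v = 0 ↔ v = root)
    (hparent : ∀ v, v ≠ root → depth v = depth (parent v) + 1) :
    ∀ (k : ℕ) (v : N), k ≤ depth v → depth (parent^[k] v) = depth v - k := by
  intro k
  induction k with
  | zero => intro v _; simp
  | succ k ih =>
    intro v hk
    have hv : v ≠ root := by
      intro h
      rw [(hdepth0 v).mpr h] at hk; omega
    have hd : depth (parent v) + 1 = depth v := (hparent v hv).symm
    rw [Function.iterate_succ_apply, ih (parent v) (by omega)]
    omega

lemma iter_root (parent : N → N) (depth : N → ℕ) (root : N)
    (hroot : parent root = root)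
    (hdepth0 : ∀ v, depth v = 0 ↔ v = root)
    (hparent : ∀ v, v ≠ root → depth v = depth (parent v) + 1)
    (v : N) (k : ℕ) (h : depth v ≤ k) : parent^[k] v = root := by
  have h0 : parent^[depth v] v = root := by
    apply (hdepth0 _).mp
    rw [depth_iter parent depth root hdepth0 hparent (depth v) v le_rfl]
    omega
  have : parent^[k] v = parent^[k - depth v] (parent^[depth v] v) := by
    rw [← Function.iterate_add_apply]; congr 1; omega
  rw [this, h0, Function.iterate_fixed hroot]

lemma anc_eq (parent : N → N) (depth : N → ℕ) (root : N)
    (hroot : parent root = root)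
    (hdepth0 : ∀ v, depth v = 0 ↔ v = root)
    (hparent : ∀ v, v ≠ root → depth v = depth (parent v) + 1)
    {L t m : ℕ} {j a : N} (hL : depth j = L) (hm : parent^[m] j = a)
    (ha : depth a = L - t) (ht : t ≤ L) : parent^[t] j = a := by
  by_cases hmL : m ≤ L
  · have hd := depth_iter parent depth root hdepth0 hparent m j (by omega)
    rw [hm, ha, hL] at hd
    have : m = t := by omega
    rwa [this] at hm
  · have hr : parent^[m] j = root :=
      iter_root parent depth root hroot hdepth0 hparent j m (by omega)
    have haroot : a = root := by rw [← hm, hr]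
    have hdr : depth root = 0 := (hdepth0 root).mpr rfl
    have htL : t = L := by rw [haroot, hdr] at ha; omega
    rw [htL, iter_root parent depth root hroot hdepth0 hparent j L (by omega), haroot]

/-- `j` is σ-maximal among leaves descending from its `t`-th ancestor. -/
def Pmax (parent : N → N) (leaf : N → Prop) (σ : N → ℝ) (j : N) (t : ℕ) : Prop :=
  ∀ i, leaf i → (∃ m, parent^[m] i = parent^[t] j) → σ i ≤ σ j

lemma Pmax_anti (parent : N → N) (leaf : N → Prop) (σ : N → ℝ) (j : N) {s t : ℕ}
    (hst : s ≤ t) (h : Pmax parent leaf σ j t) : Pmax parent leaf σ j s := by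
  intro i hi ⟨m, hm⟩
  refine h i hi ⟨(t - s) + m, ?_⟩
  rw [Function.iterate_add_apply, hm, ← Function.iterate_add_apply]
  congr 1
  omega

/-- The weight-set is the image of the downward-closed level set. -/
lemma ncard_eq (parent : N → N) (depth : N → ℕ) (root : N)
    (hroot : parent root = root)
    (hdepth0 : ∀ v, depth v = 0 ↔ v = root)
    (hparent : ∀ v, v ≠ root → depth v = depth (parent v) + 1)
    (leaf : N → Prop) (L : ℕ) (σ : N → ℝ) {j : N} (hjL : depth j = L) :
    Set.ncard {a : N | (∃ k, 0 < k ∧ parent^[k] j = a) ∧ a ≠ j ∧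
        ∀ i, leaf i → (∃ m, parent^[m] i = a) → σ i ≤ σ j} =
    ((Finset.Icc 1 L).filter (Pmax parent leaf σ j)).card := by
  have hset : {a : N | (∃ k, 0 < k ∧ parent^[k] j = a) ∧ a ≠ j ∧
        ∀ i, leaf i → (∃ m, parent^[m] i = a) → σ i ≤ σ j} =
      ↑(((Finset.Icc 1 L).filter (Pmax parent leaf σ j)).image
        (fun k => parent^[k] j)) := by
    ext a
    simp only [Set.mem_setOf_eq, Finset.coe_image, Set.mem_image, Finset.mem_coe,
      Finset.mem_filter, Finset.mem_Icc]
    constructor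
    · rintro ⟨⟨k, hk0, hk⟩, hne, hmax⟩
      by_cases hkL : k ≤ L
      · refine ⟨k, ⟨⟨hk0, hkL⟩, ?_⟩, hk⟩
        intro i hi hm
        rw [hk] at hm
        exact hmax i hi hm
      · have hr : a = root := by
          rw [← hk]
          exact iter_root parent depth root hroot hdepth0 hparent j k (by omega)
        have hL1 : 1 ≤ L := by
          rcases Nat.eq_zero_or_pos L with h0 | h0
          · exfalso
            apply hne
            rw [hr, ← (hdepth0 j).mp (by omega)]
          · exact h0
        have hLa : parent^[L] j = a := by
          rw [hr]
          exact iter_root parent depth root hroot hdepth0 hparent j L (by omega)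
        refine ⟨L, ⟨⟨hL1, le_rfl⟩, ?_⟩, hLa⟩
        intro i hi hm
        rw [hLa] at hm
        exact hmax i hi hm
    · rintro ⟨k, ⟨⟨hk1, hkL⟩, hP⟩, hk⟩
      have hda : depth a = L - k := by
        rw [← hk]
        rw [depth_iter parent depth root hdepth0 hparent k j (by omega), hjL]
      refine ⟨⟨k, by omega, hk⟩, ?_, ?_⟩
      swap
      · intro i hi hm
        rw [← hk] at hm
        exact hP i hi hm
      intro h
      rw [h, hjL] at hda
      omega
  rw [hset, Set.ncard_coe_finset]
  apply Finset.card_image_of_injOn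
  intro k hk k' hk' hkk
  simp only [Finset.mem_coe, Finset.mem_filter, Finset.mem_Icc] at hk hk'
  have d1 := depth_iter parent depth root hdepth0 hparent k j (by omega)
  have d2 := depth_iter parent depth root hdepth0 hparent k' j (by omega)
  have hkk' : parent^[k] j = parent^[k'] j := hkk
  rw [hkk'] at d1
  rw [d2] at d1
  omega

/-- threshold characterization -/
lemma card_ge_iff (parent : N → N) (leaf : N → Prop) (σ : N → ℝ) (j : N) {L t : ℕ}
    (ht1 : 1 ≤ t) (htL : t ≤ L) :
    t ≤ ((Finset.Icc 1 L).filter (Pmax parent leaf σ j)).card ↔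
      Pmax parent leaf σ j t := by
  constructor
  · intro h
    by_contra hP
    have hsub : (Finset.Icc 1 L).filter (Pmax parent leaf σ j) ⊆ Finset.Icc 1 (t - 1) := by
      intro s hs
      simp only [Finset.mem_filter, Finset.mem_Icc] at hs ⊢
      refine ⟨hs.1.1, ?_⟩
      by_contra hst
      exact hP (Pmax_anti parent leaf σ j (by omega) hs.2)
    have := Finset.card_le_card hsub
    rw [Nat.card_Icc] at this
    omega
  · intro hP
    have hsub : Finset.Icc 1 t ⊆ (Finset.Icc 1 L).filter (Pmax parent leaf σ j) := by
      intro s hs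
      simp only [Finset.mem_Icc] at hs
      simp only [Finset.mem_filter, Finset.mem_Icc]
      exact ⟨⟨hs.1, le_trans hs.2 htL⟩, Pmax_anti parent leaf σ j hs.2 hP⟩
    have := Finset.card_le_card hsub
    rw [Nat.card_Icc] at this
    omega

/-- the count of σ-maximal leaves at level `t` is σ-independent -/
lemma count_eq (parent : N → N) (depth : N → ℕ) (root : N)
    (hroot : parent root = root)
    (hdepth0 : ∀ v, depth v = 0 ↔ v = root)
    (hparent : ∀ v, v ≠ root → depth v = depth (parent v) + 1)
    (leaf : N → Prop) (L : ℕ) (hleafdepth : ∀ v, leaf v → depth v = L)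
    (σ : N → ℝ) (hσ : Function.Injective σ) {t : ℕ} (htL : t ≤ L) :
    (Finset.univ.filter (fun j => leaf j ∧ Pmax parent leaf σ j t)).card =
    (Finset.univ.filter (fun a => depth a = L - t ∧
        ∃ i, leaf i ∧ ∃ m, parent^[m] i = a)).card := by
  apply Finset.card_bij (fun j _ => parent^[t] j)
  · intro j hj
    simp only [Finset.mem_filter, Finset.mem_univ, true_and] at hj ⊢
    refine ⟨?_, j, hj.1, t, rfl⟩
    rw [depth_iter parent depth root hdepth0 hparent t j
      (by rw [hleafdepth j hj.1]; omega), hleafdepth j hj.1]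
  · intro j hj j' hj' hjj
    simp only [Finset.mem_filter, Finset.mem_univ, true_and] at hj hj'
    apply hσ
    apply le_antisymm
    · exact hj'.2 j hj.1 ⟨t, hjj⟩
    · exact hj.2 j' hj'.1 ⟨t, hjj.symm⟩
  · intro a ha
    simp only [Finset.mem_filter, Finset.mem_univ, true_and] at ha
    obtain ⟨hda, i0, hi0, m0, hm0⟩ := ha
    have hne : (Finset.univ.filter (fun i => leaf i ∧ ∃ m, parent^[m] i = a)).Nonempty :=
      ⟨i0, by simp only [Finset.mem_filter, Finset.mem_univ, true_and]; exact ⟨hi0, m0, hm0⟩⟩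
    obtain ⟨j, hj, hjmax⟩ := Finset.exists_max_image _ σ hne
    simp only [Finset.mem_filter, Finset.mem_univ, true_and] at hj
    obtain ⟨hjleaf, m, hm⟩ := hj
    have hta : parent^[t] j = a :=
      anc_eq parent depth root hroot hdepth0 hparent (hleafdepth j hjleaf) hm hda htL
    refine ⟨j, ?_, hta⟩
    simp only [Finset.mem_filter, Finset.mem_univ, true_and]
    refine ⟨hjleaf, ?_⟩
    intro i hi ⟨m', hm'⟩
    apply hjmax
    simp only [Finset.mem_filter, Finset.mem_univ, true_and]
    exact ⟨hi, m', by rw [hm', hta]⟩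



lemma ge_count (parent : N → N) (depth : N → ℕ) (root : N)
    (hroot : parent root = root)
    (hdepth0 : ∀ v, depth v = 0 ↔ v = root)
    (hparent : ∀ v, v ≠ root → depth v = depth (parent v) + 1)
    (leaf : N → Prop) (L : ℕ) (hleafdepth : ∀ v, leaf v → depth v = L)
    (σ : N → ℝ) (hσ : Function.Injective σ) (w : ℕ) :
    (Finset.univ.filter (fun j => leaf j ∧
        w ≤ ((Finset.Icc 1 L).filter (Pmax parent leaf σ j)).card)).card =
    if w = 0 then (Finset.univ.filter leaf).card
    else if w ≤ L then (Finset.univ.filter (fun a => depth a = L - w ∧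
        ∃ i, leaf i ∧ ∃ m, parent^[m] i = a)).card
    else 0 := by
  by_cases hw0 : w = 0
  · rw [if_pos hw0]
    subst hw0
    simp
  · rw [if_neg hw0]
    by_cases hwL : w ≤ L
    · rw [if_pos hwL]
      rw [← count_eq parent depth root hroot hdepth0 hparent leaf L hleafdepth σ hσ hwL]
      congr 1
      apply Finset.filter_congr
      intro j _
      exact and_congr_right fun _ =>
        card_ge_iff parent leaf σ j (by omega) hwL
    · rw [if_neg hwL]
      rw [Finset.card_eq_zero, Finset.filter_eq_empty_iff]
      intro j _
      rintro ⟨-, hd⟩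
      have h1 : ((Finset.Icc 1 L).filter (Pmax parent leaf σ j)).card ≤ (Finset.Icc 1 L).card :=
        Finset.card_filter_le _ _
      rw [Nat.card_Icc] at h1
      omega

end SortedWeightsAux

/-- Uniqueness of sorted weights for complete-level trees. -/
theorem sorted_weights_unique_complete_tree
    {N : Type*} [Fintype N] (parent : N → N) (depth : N → ℕ) (root : N)
    (hroot : parent root = root)
    (hdepth0 : ∀ v, depth v = 0 ↔ v = root)
    (hparent : ∀ v, v ≠ root → depth v = depth (parent v) + 1)
    (leaf : N → Prop) (hleaf : ∀ v, leaf v ↔ ∀ u, parent u = v → u = v)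
    (L : ℕ) (hleafdepth : ∀ v, leaf v → depth v = L)
    (σ₁ σ₂ : N → ℝ) (h₁ : Function.Injective σ₁) (h₂ : Function.Injective σ₂) :
    (Finset.univ.filter leaf).val.map (fun j =>
        1 + Set.ncard {a : N | (∃ k, 0 < k ∧ parent^[k] j = a) ∧ a ≠ j ∧
          ∀ i, leaf i → (∃ m, parent^[m] i = a) → σ₁ i ≤ σ₁ j}) =
    (Finset.univ.filter leaf).val.map (fun j =>
        1 + Set.ncard {a : N | (∃ k, 0 < k ∧ parent^[k] j = a) ∧ a ≠ j ∧
          ∀ i, leaf i → (∃ m, parent^[m] i = a) → σ₂ i ≤ σ₂ j}) := by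
  open SortedWeightsAux in
  have hG : ∀ w : ℕ,
      (Finset.univ.filter (fun j => leaf j ∧
        w ≤ ((Finset.Icc 1 L).filter (Pmax parent leaf σ₁ j)).card)).card =
      (Finset.univ.filter (fun j => leaf j ∧
        w ≤ ((Finset.Icc 1 L).filter (Pmax parent leaf σ₂ j)).card)).card := by
    intro w
    rw [ge_count parent depth root hroot hdepth0 hparent leaf L hleafdepth σ₁ h₁ w,
      ge_count parent depth root hroot hdepth0 hparent leaf L hleafdepth σ₂ h₂ w]
  have key : ∀ (d : N → ℕ) (n : ℕ),
      (Finset.univ.filter (fun j => leaf j ∧ d j = n)).card =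
      (Finset.univ.filter (fun j => leaf j ∧ n ≤ d j)).card -
      (Finset.univ.filter (fun j => leaf j ∧ n + 1 ≤ d j)).card := by
    intro d n
    have hC : Finset.univ.filter (fun j => leaf j ∧ n ≤ d j) =
        Finset.univ.filter (fun j => leaf j ∧ d j = n) ∪
        Finset.univ.filter (fun j => leaf j ∧ n + 1 ≤ d j) := by
      ext j
      simp only [Finset.mem_union, Finset.mem_filter, Finset.mem_univ, true_and]
      constructor
      · rintro ⟨h, hn⟩
        by_cases hd : d j = n
        · exact Or.inl ⟨h, hd⟩
        · exact Or.inr ⟨h, by omega⟩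
      · rintro (⟨h, hd⟩ | ⟨h, hd⟩) <;> exact ⟨h, by omega⟩
    have hdisj : Disjoint (Finset.univ.filter (fun j => leaf j ∧ d j = n))
        (Finset.univ.filter (fun j => leaf j ∧ n + 1 ≤ d j)) := by
      rw [Finset.disjoint_left]
      intro x hx hx'
      simp only [Finset.mem_filter, Finset.mem_univ, true_and] at hx hx'
      omega
    rw [hC, Finset.card_union_of_disjoint hdisj]
    omega
  have hE : ∀ n : ℕ,
      (Finset.univ.filter (fun j => leaf j ∧
        ((Finset.Icc 1 L).filter (Pmax parent leaf σ₁ j)).card = n)).card =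
      (Finset.univ.filter (fun j => leaf j ∧
        ((Finset.Icc 1 L).filter (Pmax parent leaf σ₂ j)).card = n)).card := by
    intro n
    rw [key (fun j => ((Finset.Icc 1 L).filter (Pmax parent leaf σ₁ j)).card) n,
      key (fun j => ((Finset.Icc 1 L).filter (Pmax parent leaf σ₂ j)).card) n,
      hG n, hG (n + 1)]
  apply Multiset.ext.mpr
  intro b
  rw [Multiset.count_map, Multiset.count_map]
  have hfinal : Multiset.card
      ((Finset.univ.filter leaf).val.filter (fun j =>
        b = 1 + Set.ncard {a : N | (∃ k, 0 < k ∧ parent^[k] j = a) ∧ a ≠ j ∧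
          ∀ i, leaf i → (∃ m, parent^[m] i = a) → σ₁ i ≤ σ₁ j})) =
      Multiset.card
      ((Finset.univ.filter leaf).val.filter (fun j =>
        b = 1 + Set.ncard {a : N | (∃ k, 0 < k ∧ parent^[k] j = a) ∧ a ≠ j ∧
          ∀ i, leaf i → (∃ m, parent^[m] i = a) → σ₂ i ≤ σ₂ j})) := by
    show ((Finset.univ.filter leaf).filter (fun j =>
        b = 1 + Set.ncard {a : N | (∃ k, 0 < k ∧ parent^[k] j = a) ∧ a ≠ j ∧
          ∀ i, leaf i → (∃ m, parent^[m] i = a) → σ₁ i ≤ σ₁ j})).card =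
      ((Finset.univ.filter leaf).filter (fun j =>
        b = 1 + Set.ncard {a : N | (∃ k, 0 < k ∧ parent^[k] j = a) ∧ a ≠ j ∧
          ∀ i, leaf i → (∃ m, parent^[m] i = a) → σ₂ i ≤ σ₂ j})).card
    rw [Finset.filter_filter, Finset.filter_filter]
    have hrw : ∀ (σ : N → ℝ), Finset.univ.filter (fun j => leaf j ∧
          b = 1 + Set.ncard {a : N | (∃ k, 0 < k ∧ parent^[k] j = a) ∧ a ≠ j ∧
            ∀ i, leaf i → (∃ m, parent^[m] i = a) → σ i ≤ σ j}) =
        Finset.univ.filter (fun j => leaf j ∧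
          b = 1 + ((Finset.Icc 1 L).filter (Pmax parent leaf σ j)).card) := by
      intro σ
      apply Finset.filter_congr
      intro j _
      apply and_congr_right
      intro hj
      rw [ncard_eq parent depth root hroot hdepth0 hparent leaf L σ (hleafdepth j hj)]
    rw [hrw σ₁, hrw σ₂]
    rcases Nat.eq_zero_or_pos b with hb | hb
    · subst hb
      have hz : ∀ (σ : N → ℝ), Finset.univ.filter (fun j => leaf j ∧
          (0 : ℕ) = 1 + ((Finset.Icc 1 L).filter (Pmax parent leaf σ j)).card) = ∅ := by
        intro σ
        rw [Finset.filter_eq_empty_iff]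
        rintro j - ⟨-, h⟩
        omega
      rw [hz σ₁, hz σ₂]
    · obtain ⟨n, rfl⟩ : ∃ n, b = n + 1 := ⟨b - 1, by omega⟩
      have hcong : ∀ (σ : N → ℝ),
          Finset.univ.filter (fun j => leaf j ∧
            n + 1 = 1 + ((Finset.Icc 1 L).filter (Pmax parent leaf σ j)).card) =
          Finset.univ.filter (fun j => leaf j ∧
            ((Finset.Icc 1 L).filter (Pmax parent leaf σ j)).card = n) := by
        intro σ
        apply Finset.filter_congr
        intro j _
        apply and_congr_right
        intro _
        omega
      rw [hcong σ₁, hcong σ₂, hE n]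
  convert hfinal using 3
end

section
/- Let T be a finite rooted tree with leaves at possibly different depths. For a total order sigma on the leaves define weights omega_j(sigma) = 1 + number of proper ancestors a of leaf j such that j is sigma-maximal among leaf descendants of a, and let (omega_(1)(sigma),...,omega_(n)(sigma)) be the ascending-sorted weights. Then the ordering sigma* that ranks leaves in ascending order of their depth (deepest leaf last) yields sorted weights whose prefix sums are minimal: for every other ordering sigma and every k, sum_{i=1}^k omega_(i)(sigma*) <= sum_{i=1}^k omega_(i)(sigma). -/
/-!
Under an injective ranking `τ` every node `a` is charged to `maxLeaf τ a`, the `τ`-largest leaf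
below it. The fibre of a leaf is a vertical path ending at that leaf, its size is the leaf's
weight, and the weights add up to the number of nodes; so it suffices to show that the `n - k`
largest `σ*`-weights add up to at least the `n - k` largest `σ`-weights.

The `c` largest `σ`-weights are the sizes of `c` disjoint paths inside the union of the root
paths of their leaves. For `σ*` the fibre of a node runs down to the deepest leaf below it, and
removing the longest such path `P` (a longest root-to-leaf path of the current forest) bounds
the union of the root paths of any `c` leaves by the `c` largest `σ*`-weights, by induction: the
leaf `j₀` whose root path meets `P` lowest takes the blame for `P`, since its own root path is no
longer than `P`, and every other leaf keeps only the part of its root path off `P`.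
-/

open scoped Classical

/-- The multiset of leaf weights of a finite rooted tree under a total order `σ` on the
leaves: the weight of a leaf `j` is `1` plus the number of proper ancestors `a` of `j`
such that `j` is `σ`-maximal among the leaves descending from `a`. -/
noncomputable def leafWeights {N : Type*} [Fintype N] (parent : N → N)
    (leaf : N → Prop) (σ : N → ℝ) : Multiset ℕ :=
  (Finset.univ.filter leaf).val.map (fun j =>
    1 + Set.ncard {a : N | (∃ k, 0 < k ∧ parent^[k] j = a) ∧ a ≠ j ∧
      ∀ i, leaf i → (∃ m, parent^[m] i = a) → σ i ≤ σ j})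

open Finset Function

theorem sum_take_le_sum_of_sorted {α : Type*} [AddCommMonoid α] [PartialOrder α]
    [IsOrderedAddMonoid α] [CanonicallyOrderedAdd α] {l : List α} (hl : l.Pairwise (· ≤ ·))
    {m : Multiset α} (hm : m ≤ l) {k : ℕ} (hk : k ≤ Multiset.card m) :
    (l.take k).sum ≤ m.sum := by
  induction l generalizing m k with
  | nil => simp [Multiset.le_zero.1 hm]
  | cons a l ih =>
    obtain ⟨hal, hl⟩ := List.pairwise_cons.1 hl
    cases k with
    | zero => simp
    | succ k =>
      by_cases ham : a ∈ m
      · have hle : m.erase a ≤ l := Multiset.erase_le_iff_le_cons.2 hm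
        have := ih hl hle (k := k)
          (by rw [Multiset.card_erase_of_mem ham, Nat.pred_eq_sub_one]; omega)
        rw [← Multiset.cons_erase ham, Multiset.sum_cons, List.take_succ_cons, List.sum_cons]
        gcongr
      · have hle : m ≤ l := (Multiset.le_cons_of_notMem ham).1 hm
        have hlen : k < l.length := by
          have := Multiset.card_le_card hle
          simp only [Multiset.coe_card] at this
          omega
        calc (List.take (k + 1) (a :: l)).sum = a + (l.take k).sum := by simp
          _ ≤ l[k] + (l.take k).sum := by gcongr; exact hal _ (List.getElem_mem hlen)
          _ = (l.take (k + 1)).sum := by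
            rw [List.take_add_one, List.getElem?_eq_getElem hlen, Option.toList_some,
              List.sum_append, List.sum_singleton, add_comm]
          _ ≤ m.sum := ih hl hle hk

theorem sum_take_sort_add_sum_le {α : Type*} [AddCommMonoid α] [LinearOrder α]
    [IsOrderedAddMonoid α] [CanonicallyOrderedAdd α] {k : ℕ} {M C : Multiset α} (hC : C ≤ M)
    (hcard : Multiset.card C ≤ Multiset.card M - k) :
    ((M.sort (· ≤ ·)).take k).sum + C.sum ≤ M.sum := by
  have hle : M - C ≤ (M.sort (· ≤ ·) : Multiset α) := by
    rw [Multiset.sort_eq]; exact Multiset.sub_le_self M C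
  have htake := sum_take_le_sum_of_sorted (Multiset.pairwise_sort M _) hle
    (k := min k (Multiset.card M)) (by rw [Multiset.card_sub hC]; omega)
  rw [← Multiset.length_sort (· ≤ ·), ← List.take_eq_take_min] at htake
  calc _ ≤ (M - C).sum + C.sum := by gcongr
    _ = M.sum := by rw [← Multiset.sum_add, Multiset.sub_add_cancel hC]

theorem Multiset.exists_le_map_eq_of_le_map {α β : Type*} {f : α → β} {s : Multiset β}
    {t : Multiset α} (h : s ≤ t.map f) : ∃ u ≤ t, u.map f = s := by
  induction s using Quotient.inductionOn with | h l₁ => ?_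
  induction t using Quotient.inductionOn with | h l₂ => ?_
  obtain ⟨l, hl, hsub⟩ := Multiset.coe_le.1 h
  obtain ⟨l', hl', rfl⟩ := List.sublist_map_iff.1 hsub
  exact ⟨l', Multiset.coe_le.2 hl'.subperm, Quotient.sound hl⟩

theorem Finset.exists_subset_map_val_eq_of_le {α β : Type*} {f : α → β} {s : Multiset β}
    {L : Finset α} (h : s ≤ L.val.map f) : ∃ T ⊆ L, T.val.map f = s := by
  obtain ⟨u, hu, rfl⟩ := Multiset.exists_le_map_eq_of_le_map h
  exact ⟨⟨u, Multiset.nodup_of_le hu L.nodup⟩, val_le_iff.1 hu, rfl⟩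

section RootedTree

variable {N : Type*}

def IsAncestor (parent : N → N) (a x : N) : Prop := ∃ k, parent^[k] x = a

def IsLeaf (parent : N → N) (v : N) : Prop := ∀ u, parent u = v → u = v

theorem IsAncestor.refl (parent : N → N) (a : N) : IsAncestor parent a a := ⟨0, rfl⟩

theorem IsAncestor.trans {parent : N → N} {a b c : N} (hab : IsAncestor parent a b)
    (hbc : IsAncestor parent b c) : IsAncestor parent a c := by
  obtain ⟨m, rfl⟩ := hab
  obtain ⟨n, rfl⟩ := hbc
  exact ⟨m + n, iterate_add_apply parent m n c⟩

theorem isAncestor_iterate (parent : N → N) (k : ℕ) (x : N) :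
    IsAncestor parent (parent^[k] x) x := ⟨k, rfl⟩

theorem IsAncestor.mem_of_mem {parent : N → N} {S : Finset N}
    (hS : ∀ u, parent u ∈ S → u ∈ S) {a x : N} (h : IsAncestor parent a x) (ha : a ∈ S) :
    x ∈ S := by
  obtain ⟨k, rfl⟩ := h
  induction k generalizing x with
  | zero => exact ha
  | succ k ih => exact ih (hS _ (by rwa [← iterate_succ_apply' parent]))

theorem IsLeaf.eq_of_isAncestor {parent : N → N} {j x : N} (hj : IsLeaf parent j)
    (h : IsAncestor parent j x) : x = j := by
  obtain ⟨k, rfl⟩ := h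
  induction k with
  | zero => rfl
  | succ k ih =>
    rw [iterate_succ_apply'] at hj ⊢
    have h := hj _ rfl
    rw [← h] at hj ⊢
    exact ih hj

noncomputable def ancestorsIn (parent : N → N) (S T : Finset N) : Finset N :=
  S.filter fun a => ∃ j ∈ T, IsAncestor parent a j

theorem mem_ancestorsIn {parent : N → N} {S T : Finset N} {a : N} :
    a ∈ ancestorsIn parent S T ↔ a ∈ S ∧ ∃ j ∈ T, IsAncestor parent a j := by
  simp [ancestorsIn]

theorem ancestorsIn_subset_union (p : N → Prop) {parent : N → N} {S T : Finset N} {j₀ : N}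
    (h : ∀ b ∈ (ancestorsIn parent S T).filter p, IsAncestor parent b j₀) :
    ancestorsIn parent S T ⊆ S.filter (IsAncestor parent · j₀) ∪
      ancestorsIn parent (S.filter fun b => ¬p b) (T.erase j₀) := by
  intro b hb
  obtain ⟨hbS, j, hjT, hbj⟩ := mem_ancestorsIn.1 hb
  by_cases hpb : p b
  · exact mem_union_left _ (mem_filter.2 ⟨hbS, h b (mem_filter.2 ⟨hb, hpb⟩)⟩)
  by_cases hj : j = j₀
  · exact mem_union_left _ (mem_filter.2 ⟨hbS, hj ▸ hbj⟩)
  · exact mem_union_right _ (mem_ancestorsIn.2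
      ⟨mem_filter.2 ⟨hbS, hpb⟩, j, mem_erase.2 ⟨hj, hjT⟩, hbj⟩)

structure IsRootedTree (parent : N → N) (depth : N → ℕ) (root : N) : Prop where
  parent_root : parent root = root
  depth_eq_zero_iff : ∀ v, depth v = 0 ↔ v = root
  depth_eq_depth_parent_add_one : ∀ v, v ≠ root → depth v = depth (parent v) + 1

namespace IsRootedTree

variable {parent : N → N} {depth : N → ℕ} {root : N}

theorem depth_iterate_add (ht : IsRootedTree parent depth root) {x : N} {k : ℕ}
    (hk : k ≤ depth x) : depth (parent^[k] x) + k = depth x := by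
  induction k with
  | zero => rfl
  | succ k ih =>
    have hne : parent^[k] x ≠ root := by
      intro h
      have := ih (by omega)
      rw [h, (ht.depth_eq_zero_iff root).2 rfl] at this
      omega
    rw [iterate_succ_apply', ← ih (by omega), ht.depth_eq_depth_parent_add_one _ hne]
    omega

theorem iterate_eq_root (ht : IsRootedTree parent depth root) {x : N} {k : ℕ}
    (hk : depth x ≤ k) : parent^[k] x = root := by
  have hroot : parent^[depth x] x = root :=
    (ht.depth_eq_zero_iff _).1 (by have := ht.depth_iterate_add (le_refl (depth x)); omega)
  rw [← Nat.sub_add_cancel hk, iterate_add_apply, hroot]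
  exact iterate_fixed ht.parent_root _

theorem depth_le_and_iterate_eq (ht : IsRootedTree parent depth root) {a x : N}
    (h : IsAncestor parent a x) : depth a ≤ depth x ∧ parent^[depth x - depth a] x = a := by
  obtain ⟨k, rfl⟩ := h
  rcases le_or_gt k (depth x) with hk | hk
  · have := ht.depth_iterate_add hk
    exact ⟨by omega, by rw [show depth x - depth (parent^[k] x) = k by omega]⟩
  · rw [ht.iterate_eq_root hk.le, (ht.depth_eq_zero_iff root).2 rfl, Nat.sub_zero]
    exact ⟨Nat.zero_le _, ht.iterate_eq_root le_rfl⟩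

theorem isAncestor_of_depth_le (ht : IsRootedTree parent depth root) {a b x : N}
    (ha : IsAncestor parent a x) (hb : IsAncestor parent b x) (hab : depth a ≤ depth b) :
    IsAncestor parent a b := by
  obtain ⟨hax, ha⟩ := ht.depth_le_and_iterate_eq ha
  obtain ⟨hbx, hb⟩ := ht.depth_le_and_iterate_eq hb
  refine ⟨depth b - depth a, ?_⟩
  calc parent^[depth b - depth a] b
      = parent^[depth b - depth a + (depth x - depth b)] x := by
        rw [iterate_add_apply, hb]
    _ = parent^[depth x - depth a] x := by congr 1; omega
    _ = a := ha

theorem exists_isLeaf_isAncestor [Fintype N] (ht : IsRootedTree parent depth root) (a : N) :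
    ∃ j, IsLeaf parent j ∧ IsAncestor parent a j := by
  obtain ⟨x, hx, hmax⟩ := (univ.filter (IsAncestor parent a)).exists_max_image depth
    ⟨a, by simpa using IsAncestor.refl parent a⟩
  simp only [mem_filter, mem_univ, true_and] at hx hmax
  refine ⟨x, fun u hu => ?_, hx⟩
  by_contra hne
  have hur : u ≠ root := fun h => hne (by rw [← hu, h, ht.parent_root])
  have := hmax u (hx.trans ⟨1, hu⟩)
  rw [ht.depth_eq_depth_parent_add_one u hur, hu] at this
  omega

theorem card_image_iterate (ht : IsRootedTree parent depth root) {x : N} {n : ℕ}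
    (hn : n ≤ depth x + 1) : #((range n).image (parent^[·] x)) = n := by
  rw [card_image_of_injOn, card_range]
  intro k hk l hl hkl
  simp only [coe_range, Set.mem_Iio] at hk hl
  have h₁ := ht.depth_iterate_add (x := x) (k := k) (by omega)
  have h₂ := ht.depth_iterate_add (x := x) (k := l) (by omega)
  simp only at hkl
  rw [hkl] at h₁
  omega

theorem card_filter_isAncestor_le (ht : IsRootedTree parent depth root) (S : Finset N)
    {j r : N} (hr : ∀ a ∈ S, IsAncestor parent a j → depth r ≤ depth a) :
    #(S.filter (IsAncestor parent · j)) ≤ depth j + 1 - depth r := by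
  calc #(S.filter (IsAncestor parent · j))
      ≤ #((range (depth j + 1 - depth r)).image (parent^[·] j)) := by
        refine card_le_card fun a ha => ?_
        obtain ⟨haS, haj⟩ := mem_filter.1 ha
        obtain ⟨hle, hiter⟩ := ht.depth_le_and_iterate_eq haj
        have := hr a haS haj
        exact mem_image.2 ⟨depth j - depth a, mem_range.2 (by omega), hiter⟩
    _ ≤ depth j + 1 - depth r := card_image_le.trans (card_range _).le

theorem exists_mem_forall_isAncestor (ht : IsRootedTree parent depth root) {x : N}
    {A T : Finset N} (hT : T.Nonempty)
    (hA : ∀ a ∈ A, IsAncestor parent a x ∧ ∃ j ∈ T, IsAncestor parent a j) :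
    ∃ j₀ ∈ T, ∀ a ∈ A, IsAncestor parent a j₀ := by
  rcases A.eq_empty_or_nonempty with rfl | hAne
  · exact ⟨hT.choose, hT.choose_spec, by simp⟩
  obtain ⟨b, hb, hbmax⟩ := A.exists_max_image depth hAne
  obtain ⟨j₀, hj₀, hbj₀⟩ := (hA b hb).2
  exact ⟨j₀, hj₀, fun a ha =>
    (ht.isAncestor_of_depth_le (hA a ha).1 (hA b hb).1 (hbmax a ha)).trans hbj₀⟩

end IsRootedTree

section MaxLeaf

variable [Fintype N] {α : Type*} [LinearOrder α]

noncomputable def leavesBelow (parent : N → N) (a : N) : Finset N :=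
  univ.filter fun i => IsLeaf parent i ∧ IsAncestor parent a i

theorem mem_leavesBelow {parent : N → N} {a i : N} :
    i ∈ leavesBelow parent a ↔ IsLeaf parent i ∧ IsAncestor parent a i := by
  simp [leavesBelow]

noncomputable def maxLeaf (parent : N → N) (τ : N → α) (a : N) : N :=
  if h : (leavesBelow parent a).Nonempty then (exists_max_image _ τ h).choose else a

noncomputable def chainWeights (parent : N → N) (τ : N → α) (S : Finset N) : Multiset ℕ :=
  (S.filter (IsLeaf parent)).val.map fun j => #(S.filter fun a => maxLeaf parent τ a = j)

theorem card_chainWeights {parent : N → N} (τ : N → α) (S : Finset N) :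
    Multiset.card (chainWeights parent τ S) = #(S.filter (IsLeaf parent)) := by
  rw [chainWeights, Multiset.card_map]
  rfl

namespace IsRootedTree

variable {parent : N → N} {depth : N → ℕ} {root : N} {τ : N → α}

theorem maxLeaf_spec (ht : IsRootedTree parent depth root) (τ : N → α) (a : N) :
    maxLeaf parent τ a ∈ leavesBelow parent a ∧
      ∀ i ∈ leavesBelow parent a, τ i ≤ τ (maxLeaf parent τ a) := by
  obtain ⟨j, hj⟩ := ht.exists_isLeaf_isAncestor a
  have hne : (leavesBelow parent a).Nonempty := ⟨j, mem_leavesBelow.2 hj⟩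
  rw [maxLeaf, dif_pos hne]
  exact (exists_max_image _ τ hne).choose_spec

theorem maxLeaf_eq_iff (ht : IsRootedTree parent depth root) (hτ : Injective τ)
    {a j : N} : maxLeaf parent τ a = j ↔
      j ∈ leavesBelow parent a ∧ ∀ i ∈ leavesBelow parent a, τ i ≤ τ j := by
  obtain ⟨hmem, hmax⟩ := ht.maxLeaf_spec τ a
  refine ⟨fun h => h ▸ ⟨hmem, hmax⟩, fun ⟨hj, hjmax⟩ => hτ ?_⟩
  exact le_antisymm (hjmax _ hmem) (hmax _ hj)

theorem isAncestor_maxLeaf (ht : IsRootedTree parent depth root) (τ : N → α) (a : N) :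
    IsAncestor parent a (maxLeaf parent τ a) :=
  (mem_leavesBelow.1 (ht.maxLeaf_spec τ a).1).2

theorem maxLeaf_of_isLeaf (ht : IsRootedTree parent depth root) (hτ : Injective τ)
    {j : N} (hj : IsLeaf parent j) : maxLeaf parent τ j = j := by
  refine (ht.maxLeaf_eq_iff hτ).2 ⟨mem_leavesBelow.2 ⟨hj, IsAncestor.refl parent j⟩, ?_⟩
  intro i hi
  rw [hj.eq_of_isAncestor (mem_leavesBelow.1 hi).2]

theorem maxLeaf_eq_of_isAncestor (ht : IsRootedTree parent depth root)
    (hτ : Injective τ) {a b : N} (hab : IsAncestor parent a b)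
    (hb : IsAncestor parent b (maxLeaf parent τ a)) :
    maxLeaf parent τ b = maxLeaf parent τ a := by
  obtain ⟨hmem, hmax⟩ := ht.maxLeaf_spec τ a
  refine (ht.maxLeaf_eq_iff hτ).2 ⟨mem_leavesBelow.2 ⟨(mem_leavesBelow.1 hmem).1, hb⟩, ?_⟩
  intro i hi
  obtain ⟨hleaf, hbi⟩ := mem_leavesBelow.1 hi
  exact hmax i (mem_leavesBelow.2 ⟨hleaf, hab.trans hbi⟩)

theorem depth_le_depth_maxLeaf (ht : IsRootedTree parent depth root)
    (hdeep : ∀ i j, IsLeaf parent i → IsLeaf parent j → depth i < depth j → τ i < τ j)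
    {a j : N} (hj : j ∈ leavesBelow parent a) : depth j ≤ depth (maxLeaf parent τ a) := by
  obtain ⟨hmem, hmax⟩ := ht.maxLeaf_spec τ a
  by_contra! hlt
  exact (hmax j hj).not_gt (hdeep _ _ (mem_leavesBelow.1 hmem).1 (mem_leavesBelow.1 hj).1 hlt)

theorem one_add_ncard_eq_card_filter_maxLeaf_eq (ht : IsRootedTree parent depth root)
    (hτ : Injective τ) {j : N} (hj : IsLeaf parent j) :
    1 + Set.ncard {a : N | (∃ k, 0 < k ∧ parent^[k] j = a) ∧ a ≠ j ∧
      ∀ i, IsLeaf parent i → (∃ m, parent^[m] i = a) → τ i ≤ τ j} =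
      #(univ.filter fun a => maxLeaf parent τ a = j) := by
  have hset : {a : N | (∃ k, 0 < k ∧ parent^[k] j = a) ∧ a ≠ j ∧
      ∀ i, IsLeaf parent i → (∃ m, parent^[m] i = a) → τ i ≤ τ j} =
      ↑((univ.filter fun a => maxLeaf parent τ a = j).erase j) := by
    ext a
    simp only [Set.mem_ofPred_eq, coe_erase, coe_filter, mem_univ,
      true_and, Set.mem_sdiff, Set.mem_singleton_iff, ht.maxLeaf_eq_iff hτ, mem_leavesBelow]
    constructor
    · rintro ⟨⟨k, -, hk⟩, hne, hmax⟩
      exact ⟨⟨⟨hj, k, hk⟩, fun i hi => hmax i hi.1 hi.2⟩, hne⟩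
    · rintro ⟨⟨⟨-, k, hk⟩, hmax⟩, hne⟩
      refine ⟨⟨k, Nat.pos_of_ne_zero fun h => hne ?_, hk⟩, hne, fun i hi ha => hmax i ⟨hi, ha⟩⟩
      rw [← hk, h, iterate_zero_apply]
  rw [hset, Set.ncard_coe_finset,
    card_erase_of_mem (by simp [ht.maxLeaf_of_isLeaf hτ hj])]
  have : 0 < #(univ.filter fun a => maxLeaf parent τ a = j) :=
    card_pos.2 ⟨j, by simp [ht.maxLeaf_of_isLeaf hτ hj]⟩
  omega

theorem leafWeights_eq_chainWeights (ht : IsRootedTree parent depth root) {σ : N → ℝ}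
    (hσ : Injective σ) :
    leafWeights parent (IsLeaf parent) σ = chainWeights parent σ univ := by
  refine Multiset.map_congr rfl fun j hj => ?_
  exact ht.one_add_ncard_eq_card_filter_maxLeaf_eq hσ (mem_filter.1 hj).2

theorem sum_chainWeights_univ (ht : IsRootedTree parent depth root) (τ : N → α) :
    (chainWeights parent τ univ).sum = Fintype.card N := by
  rw [← card_univ, card_eq_sum_card_fiberwise (f := maxLeaf parent τ)
    (t := univ.filter (IsLeaf parent))]
  · rfl
  · exact fun a _ => mem_filter.2
      ⟨mem_univ _, (mem_leavesBelow.1 (ht.maxLeaf_spec τ a).1).1⟩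

theorem sum_card_filter_maxLeaf_le_card_ancestorsIn (ht : IsRootedTree parent depth root)
    (τ : N → α) (T : Finset N) :
    ∑ j ∈ T, #(univ.filter fun a => maxLeaf parent τ a = j) ≤
      #(ancestorsIn parent univ T) := by
  rw [← card_biUnion]
  · refine card_le_card fun a ha => ?_
    obtain ⟨j, hj, ha⟩ := mem_biUnion.1 ha
    have ha : maxLeaf parent τ a = j := (mem_filter.1 ha).2
    exact mem_filter.2 ⟨mem_univ _, j, hj, ha ▸ ht.isAncestor_maxLeaf τ a⟩
  · intro j _ j' _ hne
    exact disjoint_filter.2 fun a _ h h' => hne (h.symm.trans h')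

theorem chainWeights_eq_cons (ht : IsRootedTree parent depth root) (hτ : Injective τ)
    {S : Finset N} {j : N} (hjS : j ∈ S) (hj : IsLeaf parent j) :
    chainWeights parent τ S = #(S.filter fun a => maxLeaf parent τ a = j) ::ₘ
      chainWeights parent τ (S.filter fun a => maxLeaf parent τ a ≠ j) := by
  have hleaves : S.filter (IsLeaf parent) =
      insert j ((S.filter fun a => maxLeaf parent τ a ≠ j).filter (IsLeaf parent)) := by
    ext x
    simp only [mem_filter, mem_insert]
    constructor
    · rintro ⟨hxS, hx⟩
      by_cases hxj : x = j
      · exact Or.inl hxj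
      · exact Or.inr ⟨⟨hxS, by rwa [ht.maxLeaf_of_isLeaf hτ hx]⟩, hx⟩
    · rintro (rfl | ⟨⟨hxS, -⟩, hx⟩)
      exacts [⟨hjS, hj⟩, ⟨hxS, hx⟩]
  rw [chainWeights, hleaves, insert_val_of_notMem (by simp [ht.maxLeaf_of_isLeaf hτ hj]),
    Multiset.map_cons, chainWeights]
  refine congrArg _ (Multiset.map_congr rfl fun x hx => ?_)
  have hxj : maxLeaf parent τ x ≠ j := (mem_filter.1 (mem_filter.1 hx).1).2
  rw [ht.maxLeaf_of_isLeaf hτ (mem_filter.1 hx).2] at hxj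
  rw [filter_filter]
  congr 1
  exact filter_congr fun a _ => ⟨fun h => ⟨h ▸ hxj, h⟩, And.right⟩

end IsRootedTree

end MaxLeaf

section DeepestLeaf

variable [Fintype N] {α : Type*} [LinearOrder α] {parent : N → N} {depth : N → ℕ} {root : N}
  {τ : N → α} {S : Finset N} {r : N}

namespace IsRootedTree

section

/- `r` maximises over `S` the number of nodes on the path from a node down to its `maxLeaf`;
when `maxLeaf` picks deepest leaves, this path is a longest root-to-leaf path of the forest `S`. -/
variable (ht : IsRootedTree parent depth root)
  (hdeep : ∀ i j, IsLeaf parent i → IsLeaf parent j → depth i < depth j → τ i < τ j)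
  (hmax : ∀ v ∈ S, depth (maxLeaf parent τ v) + 1 - depth v ≤
    depth (maxLeaf parent τ r) + 1 - depth r)
include ht hdeep hmax

theorem maxLeaf_eq_of_mem_of_isAncestor (hτ : Injective τ) {v : N} (hv : v ∈ S)
    (hvj : IsAncestor parent v (maxLeaf parent τ r)) :
    maxLeaf parent τ v = maxLeaf parent τ r := by
  have hrj := ht.isAncestor_maxLeaf τ r
  have hjv : depth (maxLeaf parent τ r) ≤ depth (maxLeaf parent τ v) :=
    ht.depth_le_depth_maxLeaf hdeep
      (mem_leavesBelow.2 ⟨(mem_leavesBelow.1 (ht.maxLeaf_spec τ r).1).1, hvj⟩)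
  have := (ht.depth_le_and_iterate_eq hvj).1
  have := (ht.depth_le_and_iterate_eq hrj).1
  have := hmax v hv
  exact ht.maxLeaf_eq_of_isAncestor hτ (ht.isAncestor_of_depth_le hrj hvj (by omega)) hvj

theorem mem_filter_maxLeaf_ne_of_parent_mem (hτ : Injective τ)
    (hS : ∀ u, parent u ∈ S → u ∈ S) (u : N)
    (hu : parent u ∈ S.filter fun a => maxLeaf parent τ a ≠ maxLeaf parent τ r) :
    u ∈ S.filter fun a => maxLeaf parent τ a ≠ maxLeaf parent τ r := by
  obtain ⟨hpu, hne⟩ := mem_filter.1 hu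
  refine mem_filter.2 ⟨hS u hpu, fun h => hne ?_⟩
  refine ht.maxLeaf_eq_of_mem_of_isAncestor hdeep hmax hτ hpu ?_
  exact (isAncestor_iterate parent 1 u).trans (h ▸ ht.isAncestor_maxLeaf τ u)

theorem le_card_filter_maxLeaf_eq (hτ : Injective τ)
    (hS : ∀ u, parent u ∈ S → u ∈ S) (hr : r ∈ S) :
    depth (maxLeaf parent τ r) + 1 - depth r ≤
      #(S.filter fun a => maxLeaf parent τ a = maxLeaf parent τ r) := by
  set j := maxLeaf parent τ r
  obtain ⟨hrj, hiter⟩ := ht.depth_le_and_iterate_eq (ht.isAncestor_maxLeaf τ r)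
  rw [← ht.card_image_iterate (x := j) (n := depth j + 1 - depth r) (by omega)]
  refine card_le_card fun a ha => ?_
  obtain ⟨m, hm, rfl⟩ := mem_image.1 ha
  rw [mem_range] at hm
  have hra : IsAncestor parent r (parent^[m] j) := ⟨depth j - depth r - m, by
    rw [← iterate_add_apply, Nat.sub_add_cancel (by omega), hiter]⟩
  have haS := hra.mem_of_mem hS hr
  exact mem_filter.2
    ⟨haS, ht.maxLeaf_eq_of_mem_of_isAncestor hdeep hmax hτ haS (isAncestor_iterate _ _ _)⟩

theorem card_filter_isAncestor_le_of_isLeaf {j : N} (hj : IsLeaf parent j) :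
    #(S.filter (IsAncestor parent · j)) ≤ depth (maxLeaf parent τ r) + 1 - depth r := by
  rcases (S.filter (IsAncestor parent · j)).eq_empty_or_nonempty with hempty | hne
  · simp [hempty]
  obtain ⟨r', hr', hmin⟩ := (S.filter (IsAncestor parent · j)).exists_min_image depth hne
  obtain ⟨hr'S, hr'j⟩ := mem_filter.1 hr'
  have hcard := ht.card_filter_isAncestor_le S (r := r') fun a ha haj =>
    hmin a (mem_filter.2 ⟨ha, haj⟩)
  have := ht.depth_le_depth_maxLeaf hdeep (τ := τ) (mem_leavesBelow.2 ⟨hj, hr'j⟩)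
  have := hmax r' hr'S
  omega

end

theorem exists_le_chainWeights_card_ancestorsIn_le (ht : IsRootedTree parent depth root)
    (hτ : Injective τ)
    (hdeep : ∀ i j, IsLeaf parent i → IsLeaf parent j → depth i < depth j → τ i < τ j)
    (S : Finset N) (hS : ∀ u, parent u ∈ S → u ∈ S) (T : Finset N)
    (hT : ∀ j ∈ T, IsLeaf parent j) :
    ∃ C ≤ chainWeights parent τ S, Multiset.card C ≤ #T ∧
      #(ancestorsIn parent S T) ≤ C.sum := by
  induction S using strongInduction generalizing T with | H S ih => ?_
  rcases (ancestorsIn parent S T).eq_empty_or_nonempty with hA | ⟨a, ha⟩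
  · exact ⟨0, Multiset.zero_le _, by simp, by simp [hA]⟩
  obtain ⟨haS, j₁, hj₁T, -⟩ := mem_ancestorsIn.1 ha
  obtain ⟨r, hr, hmax⟩ :=
    S.exists_max_image (fun v => depth (maxLeaf parent τ v) + 1 - depth v) ⟨a, haS⟩
  set j := maxLeaf parent τ r
  have hjS : j ∈ S := (ht.isAncestor_maxLeaf τ r).mem_of_mem hS hr
  have hj : IsLeaf parent j := (mem_leavesBelow.1 (ht.maxLeaf_spec τ r).1).1
  set S' := S.filter fun a => maxLeaf parent τ a ≠ j
  obtain ⟨j₀, hj₀T, hj₀⟩ := ht.exists_mem_forall_isAncestor (x := j) ⟨j₁, hj₁T⟩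
    (A := (ancestorsIn parent S T).filter fun b => maxLeaf parent τ b = j) fun b hb => by
      obtain ⟨hb, hbj⟩ := mem_filter.1 hb
      exact ⟨hbj ▸ ht.isAncestor_maxLeaf τ b, (mem_ancestorsIn.1 hb).2⟩
  obtain ⟨C, hC, hCcard, hCsum⟩ := ih S' (filter_ssubset.2 ⟨r, hr, by simp [j]⟩)
    (ht.mem_filter_maxLeaf_ne_of_parent_mem hdeep hmax hτ hS) (T.erase j₀)
    fun j hj => hT j (mem_of_mem_erase hj)
  refine ⟨#(S.filter fun a => maxLeaf parent τ a = j) ::ₘ C, ?_, ?_, ?_⟩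
  · rw [ht.chainWeights_eq_cons hτ hjS hj]
    exact Multiset.cons_le_cons _ hC
  · rw [Multiset.card_cons, card_erase_of_mem hj₀T] at *
    have := card_pos.2 ⟨j₀, hj₀T⟩
    omega
  · calc #(ancestorsIn parent S T)
        ≤ #(S.filter (IsAncestor parent · j₀)) + #(ancestorsIn parent S' (T.erase j₀)) :=
          (card_le_card (ancestorsIn_subset_union _ hj₀)).trans
            (card_union_le _ _)
      _ ≤ #(S.filter fun a => maxLeaf parent τ a = j) + C.sum := add_le_add
          ((ht.card_filter_isAncestor_le_of_isLeaf hdeep hmax (hT j₀ hj₀T)).trans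
            (ht.le_card_filter_maxLeaf_eq hdeep hmax hτ hS hr)) hCsum
      _ = _ := (Multiset.sum_cons _ _).symm

theorem sum_take_add_card_ancestorsIn_le (ht : IsRootedTree parent depth root)
    (hτ : Injective τ)
    (hdeep : ∀ i j, IsLeaf parent i → IsLeaf parent j → depth i < depth j → τ i < τ j)
    {k : ℕ} {T : Finset N} (hT : ∀ j ∈ T, IsLeaf parent j)
    (hcard : #T ≤ #(univ.filter (IsLeaf parent)) - k) :
    (((chainWeights parent τ univ).sort (· ≤ ·)).take k).sum +
      #(ancestorsIn parent univ T) ≤ Fintype.card N := by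
  obtain ⟨C, hC, hCcard, hCsum⟩ := ht.exists_le_chainWeights_card_ancestorsIn_le hτ hdeep
    univ (fun u _ => mem_univ u) T hT
  have := sum_take_sort_add_sum_le hC (k := k) (by rw [card_chainWeights]; omega)
  rw [ht.sum_chainWeights_univ] at this
  omega

theorem exists_card_le_sum_take_add_card_ancestorsIn (ht : IsRootedTree parent depth root)
    (τ : N → α) (k : ℕ) :
    ∃ T : Finset N, (∀ j ∈ T, IsLeaf parent j) ∧
      #T = #(univ.filter (IsLeaf parent)) - k ∧
      Fintype.card N ≤ (((chainWeights parent τ univ).sort (· ≤ ·)).take k).sum +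
        #(ancestorsIn parent univ T) := by
  set l := (chainWeights parent τ univ).sort (· ≤ ·)
  have hdrop : (↑(l.drop k) : Multiset ℕ) ≤ chainWeights parent τ univ := by
    rw [← Multiset.sort_eq (chainWeights parent τ univ) (· ≤ ·)]
    exact Multiset.coe_le.2 (List.drop_sublist k l).subperm
  obtain ⟨T, hTleaf, hT⟩ := exists_subset_map_val_eq_of_le hdrop
  refine ⟨T, fun j hj => (mem_filter.1 (hTleaf hj)).2, ?_, ?_⟩
  · rw [← card_val, ← Multiset.card_map, hT, Multiset.coe_card, List.length_drop,
      Multiset.length_sort, card_chainWeights]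
  · have hfibers := ht.sum_card_filter_maxLeaf_le_card_ancestorsIn τ T
    rw [sum_eq_multiset_sum, hT, Multiset.sum_coe] at hfibers
    have hl : l.sum = Fintype.card N := by
      rw [← ht.sum_chainWeights_univ τ,
        ← Multiset.sort_eq (chainWeights parent τ univ) (· ≤ ·), Multiset.sum_coe]
    have := List.sum_take_add_sum_drop l k
    omega

end IsRootedTree

end DeepestLeaf

end RootedTree

/-- Least favorable weights (Appendix A.3): in a finite rooted tree with leaves at
possibly different depths, the ordering `σ*` ranking leaves in ascending order of
depth (deepest leaf last) yields ascending-sorted weights whose prefix sums are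
minimal: for every other ordering `σ` and every `k`,
`∑_{i=1}^k ω_(i)(σ*) ≤ ∑_{i=1}^k ω_(i)(σ)`. -/
theorem least_favorable_weights
    {N : Type*} [Fintype N] (parent : N → N) (depth : N → ℕ) (root : N)
    (hroot : parent root = root)
    (hdepth0 : ∀ v, depth v = 0 ↔ v = root)
    (hparent : ∀ v, v ≠ root → depth v = depth (parent v) + 1)
    (leaf : N → Prop) (hleaf : ∀ v, leaf v ↔ ∀ u, parent u = v → u = v)
    (σstar : N → ℝ) (hstarinj : Function.Injective σstar)
    (hstar : ∀ i j, leaf i → leaf j → depth i < depth j → σstar i < σstar j)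
    (σ : N → ℝ) (hinj : Function.Injective σ) :
    ∀ k : ℕ,
      (((leafWeights parent leaf σstar).sort (· ≤ ·)).take k).sum ≤
        (((leafWeights parent leaf σ).sort (· ≤ ·)).take k).sum := by
  intro k
  obtain rfl : leaf = IsLeaf parent := funext fun v => propext (hleaf v)
  have ht : IsRootedTree parent depth root := ⟨hroot, hdepth0, hparent⟩
  rw [ht.leafWeights_eq_chainWeights hstarinj, ht.leafWeights_eq_chainWeights hinj]
  obtain ⟨T, hT, hTcard, hσ⟩ := ht.exists_card_le_sum_take_add_card_ancestorsIn σ k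
  have hσstar := ht.sum_take_add_card_ancestorsIn_le hstarinj hstar hT hTcard.le
  omega
end

section
/- Let P_1,...,P_n be independent random variables with P_j ~ U[0,1] for j in a set H_0, let alpha_1 <= ... <= alpha_n be thresholds with alpha_k/(D + k) <= q (1 - alpha_k)/(n + 1 - k) for a fixed integer D >= 0 and q in (0,1). Let d be the step-down rejection count with these thresholds and V = #{j in H_0 : P_j <= alpha_d among rejected}. Then E[ V / (D + max(d,1)) ] <= q. -/
open MeasureTheory ProbabilityTheory
open scoped Classical

/-- The step-down rejection count for p-values `x : Fin n → ℝ` with thresholds `α`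
(1-indexed): the largest `k ≤ n` such that for every `i ≤ k`, at least `i` of the
p-values are `≤ α i` (i.e. the `i`-th order statistic is `≤ α i`). -/
noncomputable def stepdownCount (n : ℕ) (x : Fin n → ℝ) (α : ℕ → ℝ) : ℕ :=
  Nat.findGreatest
    (fun k => ∀ i, 1 ≤ i → i ≤ k →
      i ≤ (Finset.univ.filter (fun j : Fin n => x j ≤ α i)).card) n

/-!
Write `R` for the step-down count and `rᵢ` for the step-down count of the p-values other than
`Pᵢ`, computed with the same thresholds. If `Pᵢ` is rejected (`Pᵢ ≤ α_R`), then `rᵢ < R` and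
`Pᵢ ≤ α_{rᵢ+1}`, so `V / (D + max R 1) ≤ ∑_{i ∈ H₀} 1{Pᵢ ≤ α_{rᵢ+1}} / (D + rᵢ + 1)`.
Since `rᵢ` is independent of the uniform `Pᵢ`, the expectation of the `i`-th term is
`∑ₖ P(rᵢ = k) α_{k+1} / (D + k + 1)`, which the threshold condition bounds by
`q E[1{Pᵢ > α_{rᵢ+1}} / (n - rᵢ)]`. Finally `∑ᵢ 1{Pᵢ > α_{rᵢ+1}} / (n - rᵢ) ≤ 1` pointwise:
each such `i` is not rejected and `rᵢ ≤ R`, so its term is at most `1 / (n - R)`, and at most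
`n - R` of the p-values are not rejected.
-/

open Finset

section Stepdown

variable {N : ℕ} {c c' : ℕ → ℕ} {k : ℕ}

-- `stepdownCount n x α` is definitionally `stepdown n fun k => #{j | x j ≤ α k}`. Under
-- `open scoped Classical` this definition carries the classical `Decidable` instance, hence the
-- `convert`s against the `Nat.findGreatest` lemmas.
noncomputable def stepdown (N : ℕ) (c : ℕ → ℕ) : ℕ :=
  Nat.findGreatest (fun k => ∀ i, 1 ≤ i → i ≤ k → i ≤ c i) N

theorem stepdown_le : stepdown N c ≤ N := by
  unfold stepdown
  convert Nat.findGreatest_le N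

theorem le_apply_of_le_stepdown (hk : k ≤ stepdown N c) : k ≤ c k := by
  rcases k.eq_zero_or_pos with rfl | hk0
  · exact Nat.zero_le _
  · unfold stepdown at hk
    have hspec := Nat.findGreatest_spec (P := fun k => ∀ i, 1 ≤ i → i ≤ k → i ≤ c i)
      (Nat.zero_le N) (fun _ h1 h0 => by omega)
    convert hspec k hk0 hk

theorem le_stepdown (hkN : k ≤ N) (hk : ∀ i, 1 ≤ i → i ≤ k → i ≤ c i) : k ≤ stepdown N c := by
  unfold stepdown
  convert Nat.le_findGreatest (P := fun k => ∀ i, 1 ≤ i → i ≤ k → i ≤ c i) hkN hk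

theorem stepdown_mono (h : ∀ k, c k ≤ c' k) : stepdown N c ≤ stepdown N c' :=
  le_stepdown stepdown_le fun _ _ hi => (le_apply_of_le_stepdown hi).trans (h _)

theorem measurable_stepdown {T : Type*} [MeasurableSpace T] {c : T → ℕ → ℕ}
    (hc : ∀ k, Measurable (c · k)) : Measurable fun t => stepdown N (c t) := by
  unfold stepdown
  refine measurable_findGreatest (p := fun t k => ∀ i, 1 ≤ i → i ≤ k → i ≤ c t i)
    fun k _ => ?_
  simp only [measurableSet_setOfPred]
  exact Measurable.forall fun i => measurable_const.imp <| measurable_const.imp <|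
    measurableSet_setOfPred.mp (hc i measurableSet_Ici)

end Stepdown

section LeaveOneOut

variable {n : ℕ} {x : Fin n → ℝ} {α : ℕ → ℝ} {i : Fin n} {k l : ℕ}

noncomputable def stepdownCountWithout (i : Fin n) (x : Fin n → ℝ) (α : ℕ → ℝ) : ℕ :=
  stepdown n (fun k => #{j ∈ univ.erase i | x j ≤ α k})

theorem card_filter_le_mono (hα : Monotone α) (s : Finset (Fin n)) (hkl : k ≤ l) :
    #{j ∈ s | x j ≤ α k} ≤ #{j ∈ s | x j ≤ α l} :=
  card_le_card <| monotone_filter_right s fun _ _ h => h.trans (hα hkl)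

theorem card_filter_erase_le (k : ℕ) : #{j ∈ univ.erase i | x j ≤ α k} ≤ #{j | x j ≤ α k} :=
  card_le_card <| filter_subset_filter _ (erase_subset i univ)

theorem card_filter_erase_lt (k : ℕ) : #{j ∈ univ.erase i | x j ≤ α k} < n :=
  calc #{j ∈ univ.erase i | x j ≤ α k} ≤ #(univ.erase i) := card_filter_le _ _
    _ < n := by simpa using card_erase_lt_of_mem (mem_univ i)

theorem card_filter_erase_add_one (h : x i ≤ α k) :
    #{j ∈ univ.erase i | x j ≤ α k} + 1 = #{j | x j ≤ α k} := by
  rw [filter_erase, card_erase_add_one (by simpa using h)]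

theorem card_filter_erase_eq (h : α k < x i) :
    #{j ∈ univ.erase i | x j ≤ α k} = #{j | x j ≤ α k} := by
  rw [filter_erase, erase_eq_of_notMem (by simpa using h)]

theorem stepdownCountWithout_lt : stepdownCountWithout i x α < n :=
  (le_apply_of_le_stepdown le_rfl).trans_lt (card_filter_erase_lt _)

theorem stepdownCountWithout_le_stepdownCount :
    stepdownCountWithout i x α ≤ stepdownCount n x α :=
  stepdown_mono card_filter_erase_le

theorem stepdownCountWithout_lt_stepdownCount (hα : Monotone α)
    (hi : x i ≤ α (stepdownCount n x α)) :
    stepdownCountWithout i x α < stepdownCount n x α := by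
  set R := stepdownCount n x α
  by_contra! hR
  have hRn : R < n := hR.trans_lt stepdownCountWithout_lt
  have hR1 : R + 1 ≤ #{j | x j ≤ α (R + 1)} :=
    calc R + 1 ≤ #{j ∈ univ.erase i | x j ≤ α R} + 1 := by
          gcongr; exact le_apply_of_le_stepdown hR
      _ ≤ #{j ∈ univ.erase i | x j ≤ α (R + 1)} + 1 := by
          gcongr 1; exact card_filter_le_mono hα _ (Nat.le_succ R)
      _ = #{j | x j ≤ α (R + 1)} := card_filter_erase_add_one (hi.trans (hα (Nat.le_succ R)))
  have : R + 1 ≤ R := le_stepdown hRn fun k _ hk => by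
    rcases hk.lt_or_eq with hk | rfl
    · exact (le_apply_of_le_stepdown ((Nat.lt_succ_iff.mp hk).trans hR)).trans
        (card_filter_erase_le k)
    · exact hR1
  omega

theorem le_threshold_stepdownCountWithout_succ (hα : Monotone α)
    (hi : x i ≤ α (stepdownCount n x α)) :
    x i ≤ α (stepdownCountWithout i x α + 1) := by
  set r := stepdownCountWithout i x α
  by_contra! hr
  have hrR := stepdownCountWithout_lt_stepdownCount hα hi
  have : r + 1 ≤ r := le_stepdown stepdownCountWithout_lt fun k _ hk => by
    rw [card_filter_erase_eq ((hα hk).trans_lt hr)]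
    exact le_apply_of_le_stepdown (hk.trans hrR)
  omega

end LeaveOneOut

section Pointwise

variable {n : ℕ} {α : ℕ → ℝ}

theorem card_filter_div_le_sum (hα : Monotone α) (x : Fin n → ℝ) (s : Finset (Fin n)) {D : ℝ}
    (hD : 0 ≤ D) :
    (#{j ∈ s | x j ≤ α (stepdownCount n x α)} : ℝ) / (D + max (stepdownCount n x α : ℝ) 1) ≤
      ∑ i ∈ s, if x i ≤ α (stepdownCountWithout i x α + 1) then
        (D + stepdownCountWithout i x α + 1)⁻¹ else 0 := by
  rw [div_eq_mul_inv, ← sum_boole, sum_mul]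
  refine sum_le_sum fun i _ => ?_
  by_cases hi : x i ≤ α (stepdownCount n x α)
  · have hrR : (stepdownCountWithout i x α : ℝ) + 1 ≤ stepdownCount n x α := by
      exact_mod_cast stepdownCountWithout_lt_stepdownCount hα hi
    rw [if_pos hi, if_pos (le_threshold_stepdownCountWithout_succ hα hi), one_mul]
    exact inv_anti₀ (by positivity) (by linarith [le_max_left (stepdownCount n x α : ℝ) 1])
  · rw [if_neg hi, zero_mul]
    split_ifs <;> positivity

theorem sum_ite_lt_le_one (hα : Monotone α) (x : Fin n → ℝ) (s : Finset (Fin n)) :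
    ∑ i ∈ s, (if α (stepdownCountWithout i x α + 1) < x i then
      ((n : ℝ) - stepdownCountWithout i x α)⁻¹ else 0) ≤ 1 := by
  set R := stepdownCount n x α
  have hRn : (R : ℝ) ≤ n := by exact_mod_cast stepdown_le
  have hR : R ≤ #{j | x j ≤ α R} := le_apply_of_le_stepdown le_rfl
  have hcard : (#{j | α R < x j} : ℝ) ≤ n - R := by
    have hsplit := card_filter_add_card_filter_not (s := univ) (fun j => x j ≤ α R)
    simp only [not_le, card_univ, Fintype.card_fin] at hsplit
    rw [le_sub_iff_add_le]
    exact_mod_cast (by omega : #{j | α R < x j} + R ≤ n)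
  have hterm : ∀ i ∈ s, (if α (stepdownCountWithout i x α + 1) < x i then
      ((n : ℝ) - stepdownCountWithout i x α)⁻¹ else 0) ≤
      if α R < x i then ((n : ℝ) - R)⁻¹ else 0 := by
    intro i _
    by_cases hi : α (stepdownCountWithout i x α + 1) < x i
    · have hRi : α R < x i :=
        lt_of_not_ge fun h => hi.not_ge (le_threshold_stepdownCountWithout_succ hα h)
      have hRlt : (R : ℝ) < n := by
        have := card_filter_erase_lt (i := i) (x := x) (α := α) R
        rw [card_filter_erase_eq hRi] at this
        exact_mod_cast hR.trans_lt this
      have hrR : (stepdownCountWithout i x α : ℝ) ≤ R := by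
        exact_mod_cast stepdownCountWithout_le_stepdownCount
      rw [if_pos hi, if_pos hRi]
      exact inv_anti₀ (by linarith) (by linarith)
    · rw [if_neg hi]
      split_ifs <;> simp [hRn]
  calc _ ≤ ∑ i ∈ s, if α R < x i then ((n : ℝ) - R)⁻¹ else 0 := sum_le_sum hterm
    _ ≤ ∑ i, if α R < x i then ((n : ℝ) - R)⁻¹ else 0 :=
        sum_le_sum_of_subset_of_nonneg (subset_univ s) fun _ _ _ => by split_ifs <;> simp [hRn]
    _ = #{j | α R < x j} / ((n : ℝ) - R) := by
        rw [sum_ite, sum_const, sum_const_zero]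
        simp [div_eq_mul_inv]
    _ ≤ 1 := div_le_one_of_le₀ hcard (by linarith)

end Pointwise

section StepdownMeasurable

variable {n : ℕ} {α : ℕ → ℝ}

theorem measurable_card_filter_le (s : Finset (Fin n)) (t : ℝ) :
    Measurable fun x : Fin n → ℝ => #{j ∈ s | x j ≤ t} := by
  simp_rw [card_filter]
  exact Finset.measurable_sum _ fun j _ =>
    Measurable.ite (measurableSet_le (measurable_pi_apply j) measurable_const)
      measurable_const measurable_const

theorem measurable_stepdownCountWithout (i : Fin n) :
    Measurable fun x => stepdownCountWithout i x α :=
  measurable_stepdown fun k => measurable_card_filter_le _ (α k)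

theorem dependsOn_stepdownCountWithout (i : Fin n) :
    DependsOn (fun x => stepdownCountWithout i x α) {i}ᶜ := fun x y h => by
  have hcount (k : ℕ) : #{j ∈ univ.erase i | x j ≤ α k} = #{j ∈ univ.erase i | y j ≤ α k} :=
    congrArg card <| filter_congr fun j hj => by rw [h j (ne_of_mem_erase hj)]
  simp only [stepdownCountWithout, hcount]

end StepdownMeasurable

section Uniform

variable {Ω : Type*} [MeasurableSpace Ω] {μ : Measure Ω} {X : Ω → ℝ} {a : ℝ}

theorem measureReal_preimage_Iic_of_map_eq (hX : Measurable X)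
    (hunif : μ.map X = volume.restrict (Set.Icc 0 1)) (ha : a ∈ Set.Icc (0 : ℝ) 1) :
    μ.real (X ⁻¹' Set.Iic a) = a := by
  have hset : Set.Iic a ∩ Set.Icc 0 1 = Set.Icc 0 a := by
    ext t
    simp only [Set.mem_inter_iff, Set.mem_Iic, Set.mem_Icc]
    exact ⟨fun h => ⟨h.2.1, h.1⟩, fun h => ⟨h.2, h.1, h.2.trans ha.2⟩⟩
  rw [measureReal_def, ← Measure.map_apply hX measurableSet_Iic, hunif,
    Measure.restrict_apply measurableSet_Iic, hset, ← measureReal_def,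
    Real.volume_real_Icc_of_le ha.1, sub_zero]

theorem measureReal_preimage_Ioi_of_map_eq [IsProbabilityMeasure μ] (hX : Measurable X)
    (hunif : μ.map X = volume.restrict (Set.Icc 0 1)) (ha : a ∈ Set.Icc (0 : ℝ) 1) :
    μ.real (X ⁻¹' Set.Ioi a) = 1 - a := by
  rw [← Set.compl_Iic, Set.preimage_compl, probReal_compl_eq_one_sub (hX measurableSet_Iic),
    measureReal_preimage_Iic_of_map_eq hX hunif ha]

end Uniform

section IndependentIndicator

variable {Ω β κ : Type*} {X : Ω → β} {K : Ω → κ} {S : Finset κ} {B C : κ → Set β}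

theorem ite_mem_eq_sum_indicator (hKS : ∀ ω, K ω ∈ S) (w : κ → ℝ) (ω : Ω) :
    (if X ω ∈ B (K ω) then w (K ω) else 0) =
      ∑ k ∈ S, (K ⁻¹' {k} ∩ X ⁻¹' B k).indicator (fun _ => w k) ω := by
  rw [sum_eq_single_of_mem (K ω) (hKS ω) fun k _ hk => Set.indicator_of_notMem
    (fun h => hk h.1.symm) _]
  by_cases h : X ω ∈ B (K ω) <;> simp [h, Set.indicator]

variable [MeasurableSpace Ω] [MeasurableSpace β] [MeasurableSpace κ] [MeasurableSingletonClass κ]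
  {μ : Measure Ω}

theorem integrable_ite_mem [IsFiniteMeasure μ] (hX : Measurable X) (hK : Measurable K)
    (hB : ∀ k, MeasurableSet (B k)) (hKS : ∀ ω, K ω ∈ S) (w : κ → ℝ) :
    Integrable (fun ω => if X ω ∈ B (K ω) then w (K ω) else 0) μ := by
  simp_rw [ite_mem_eq_sum_indicator hKS]
  exact integrable_finsetSum _ fun k _ =>
    (integrable_const _).indicator ((hK (measurableSet_singleton k)).inter (hX (hB k)))

theorem integral_ite_mem_of_indepFun [IsFiniteMeasure μ] (hX : Measurable X)
    (hK : Measurable K) (hXK : IndepFun X K μ) (hB : ∀ k, MeasurableSet (B k))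
    (hKS : ∀ ω, K ω ∈ S) (w : κ → ℝ) :
    ∫ ω, (if X ω ∈ B (K ω) then w (K ω) else 0) ∂μ =
      ∑ k ∈ S, μ.real (K ⁻¹' {k}) * (μ.real (X ⁻¹' B k) * w k) := by
  simp_rw [ite_mem_eq_sum_indicator hKS]
  have hmeas k := (hK (measurableSet_singleton k)).inter (hX (hB k))
  rw [integral_finsetSum _ fun k _ => (integrable_const _).indicator (hmeas k)]
  refine sum_congr rfl fun k _ => ?_
  rw [integral_indicator_const _ (hmeas k), smul_eq_mul, measureReal_def, Set.inter_comm,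
    hXK.measure_inter_preimage_eq_mul _ _ (hB k) (measurableSet_singleton k),
    ENNReal.toReal_mul, ← measureReal_def, ← measureReal_def]
  ring

theorem integral_ite_mem_le_of_indepFun [IsFiniteMeasure μ] (hX : Measurable X)
    (hK : Measurable K) (hXK : IndepFun X K μ) (hB : ∀ k, MeasurableSet (B k))
    (hC : ∀ k, MeasurableSet (C k)) (hKS : ∀ ω, K ω ∈ S) {w v : κ → ℝ}
    (hwv : ∀ k ∈ S, μ.real (X ⁻¹' B k) * w k ≤ μ.real (X ⁻¹' C k) * v k) :
    ∫ ω, (if X ω ∈ B (K ω) then w (K ω) else 0) ∂μ ≤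
      ∫ ω, (if X ω ∈ C (K ω) then v (K ω) else 0) ∂μ := by
  rw [integral_ite_mem_of_indepFun hX hK hXK hB hKS, integral_ite_mem_of_indepFun hX hK hXK hC hKS]
  exact sum_le_sum fun k hk => mul_le_mul_of_nonneg_left (hwv k hk) measureReal_nonneg

end IndependentIndicator

theorem ProbabilityTheory.iIndepFun.indepFun_of_dependsOn {Ω ι β γ : Type*} [MeasurableSpace Ω]
    [MeasurableSpace β] [MeasurableSpace γ] [Fintype ι] [DecidableEq ι] [Inhabited β]
    {μ : Measure Ω} {f : ι → Ω → β} (hf : iIndepFun f μ) (hmeas : ∀ j, Measurable (f j))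
    {g : (ι → β) → γ} (hg : Measurable g) {i : ι} (hgi : DependsOn g {i}ᶜ) :
    IndepFun (f i) (fun ω => g (fun j => f j ω)) μ := by
  let extend : (({i}ᶜ : Finset ι) → β) → ι → β := fun y j =>
    if h : j = i then default else y ⟨j, by simpa using h⟩
  have hext : Measurable extend := measurable_pi_lambda _ fun j => by
    by_cases h : j = i
    · simp only [extend, dif_pos h, measurable_const]
    · simp only [extend, dif_neg h]
      exact measurable_pi_apply _
  have hfactor : (fun ω => g fun j => f j ω) =
      (g ∘ extend) ∘ fun ω (j : ({i}ᶜ : Finset ι)) => f j ω :=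
    funext fun ω => hgi fun j hj => by simp [extend, Set.mem_compl_singleton_iff.mp hj]
  rw [hfactor]
  exact (hf.indepFun_finset {i} {i}ᶜ disjoint_compl_right hmeas).comp
    (measurable_pi_apply ⟨i, mem_singleton_self i⟩) (hg.comp hext)

theorem integral_le_of_le_sum_of_sum_le {Ω ι : Type*} [MeasurableSpace Ω] {μ : Measure Ω}
    [IsProbabilityMeasure μ] {F : Ω → ℝ} {s : Finset ι} {f g : ι → Ω → ℝ} {q : ℝ}
    (hF : 0 ≤ F) (hFf : ∀ ω, F ω ≤ ∑ i ∈ s, f i ω) (hgq : ∀ ω, ∑ i ∈ s, g i ω ≤ q)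
    (hf : ∀ i, Integrable (f i) μ) (hg : ∀ i, Integrable (g i) μ)
    (hfg : ∀ i ∈ s, ∫ ω, f i ω ∂μ ≤ ∫ ω, g i ω ∂μ) :
    ∫ ω, F ω ∂μ ≤ q :=
  calc ∫ ω, F ω ∂μ ≤ ∫ ω, ∑ i ∈ s, f i ω ∂μ :=
        integral_mono_of_nonneg (ae_of_all _ hF) (integrable_finsetSum _ fun i _ => hf i)
          (ae_of_all _ hFf)
    _ = ∑ i ∈ s, ∫ ω, f i ω ∂μ := integral_finsetSum _ fun i _ => hf i
    _ ≤ ∑ i ∈ s, ∫ ω, g i ω ∂μ := sum_le_sum hfg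
    _ = ∫ ω, ∑ i ∈ s, g i ω ∂μ := (integral_finsetSum _ fun i _ => hg i).symm
    _ ≤ ∫ _, q ∂μ := integral_mono (integrable_finsetSum _ fun i _ => hg i) (integrable_const q) hgq
    _ = q := by simp

/-- Single-level FAR bound (display (A.2) of Theorem 1's proof): for `n` independent
p-values with nulls `H₀` uniform on `[0,1]`, nondecreasing thresholds satisfying
`α_k/(D+k) ≤ q(1-α_k)/(n+1-k)`, step-down rejection count `d`, and
`V = #{j ∈ H₀ : P_j ≤ α_d}` false rejections, we have `E[V/(D + max(d,1))] ≤ q`. -/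
theorem single_level_far_bound {Ω : Type*} [MeasurableSpace Ω] (μ : Measure Ω)
    [IsProbabilityMeasure μ] (n D : ℕ) (q : ℝ) (hq : q ∈ Set.Ioo (0:ℝ) 1)
    (P : Fin n → Ω → ℝ) (hmeas : ∀ j, Measurable (P j))
    (hindep : iIndepFun P μ)
    (H₀ : Finset (Fin n))
    (hunif : ∀ j ∈ H₀, Measure.map (P j) μ = volume.restrict (Set.Icc (0:ℝ) 1))
    (α : ℕ → ℝ) (hα01 : ∀ k, α k ∈ Set.Ioo (0:ℝ) 1) (hαmono : Monotone α)
    (hαq : ∀ k, 1 ≤ k → k ≤ n →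
      α k / ((D : ℝ) + (k : ℝ)) ≤ q * (1 - α k) / ((n : ℝ) + 1 - (k : ℝ))) :
    (∫ ω,
        ((H₀.filter (fun j =>
            P j ω ≤ α (stepdownCount n (fun j' => P j' ω) α))).card : ℝ) /
          ((D : ℝ) + max ((stepdownCount n (fun j' => P j' ω) α : ℝ)) 1) ∂μ) ≤ q := by
  let K : Fin n → Ω → ℕ := fun i ω => stepdownCountWithout i (fun j => P j ω) α
  have hK_meas (i : Fin n) : Measurable (K i) :=
    (measurable_stepdownCountWithout i).comp (measurable_pi_lambda _ hmeas)
  have hK_range (i : Fin n) (ω : Ω) : K i ω ∈ range n := mem_range.mpr stepdownCountWithout_lt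
  let B : ℕ → Set ℝ := fun k => Set.Iic (α (k + 1))
  let C : ℕ → Set ℝ := fun k => Set.Ioi (α (k + 1))
  let w : ℕ → ℝ := fun k => ((D : ℝ) + k + 1)⁻¹
  let v : ℕ → ℝ := fun k => q * ((n : ℝ) - k)⁻¹
  have hB (k : ℕ) : MeasurableSet (B k) := measurableSet_Iic
  have hC (k : ℕ) : MeasurableSet (C k) := measurableSet_Ioi
  have hwv (i : Fin n) (hi : i ∈ H₀) (k : ℕ) (hk : k ∈ range n) :
      μ.real (P i ⁻¹' B k) * w k ≤ μ.real (P i ⁻¹' C k) * v k := by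
    have hα := Set.Ioo_subset_Icc_self (hα01 (k + 1))
    rw [measureReal_preimage_Iic_of_map_eq (hmeas i) (hunif i hi) hα,
      measureReal_preimage_Ioi_of_map_eq (hmeas i) (hunif i hi) hα]
    convert hαq (k + 1) (Nat.le_add_left 1 k) (mem_range.mp hk) using 1 <;> push_cast <;> ring
  refine integral_le_of_le_sum_of_sum_le (s := H₀)
    (f := fun i ω => if P i ω ∈ B (K i ω) then w (K i ω) else 0)
    (g := fun i ω => if P i ω ∈ C (K i ω) then v (K i ω) else 0)
    (fun ω => by positivity) (fun ω => ?_) (fun ω => ?_)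
    (fun i => integrable_ite_mem (hmeas i) (hK_meas i) hB (hK_range i) w)
    (fun i => integrable_ite_mem (hmeas i) (hK_meas i) hC (hK_range i) v)
    fun i hi => integral_ite_mem_le_of_indepFun (hmeas i) (hK_meas i)
      (hindep.indepFun_of_dependsOn hmeas (measurable_stepdownCountWithout i)
        (dependsOn_stepdownCountWithout i)) hB hC (hK_range i) (hwv i hi)
  · simpa [B, w] using card_filter_div_le_sum hαmono (fun j => P j ω) H₀ (Nat.cast_nonneg D)
  · simp only [C, v, Set.mem_Ioi, ← mul_ite_zero, ← mul_sum]
    exact mul_le_of_le_one_right hq.1.le (sum_ite_lt_le_one hαmono _ H₀)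
end
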